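/- arXiv:1811.01646 — 7 statements merged into one kernel-verified Lean document; each statement's English description precedes it below -/
import Mathlib

section
/- Let n ≥ 1 and 1 ≤ k ≤ n. For every n×n real matrix A and every n×n real matrix H, the function t ↦ σ_k(A + tH) is differentiable at t = 0 and d/dt|_{t=0} σ_k(A + tH) = trace(T_{k−1}(A) · H). In other words, the Newton transformation T_{k−1}(A) is the gradient of σ_k with respect to the matrix entries: T_{k−1}(A)^i_j = ∂σ_k(A)/∂A_{ij}. -/
/-!
Put `P(t) = det (X·I − A − t·H)`, a polynomial in `t` with coefficients in `ℝ[X]`, so that the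
derivative in question is the `X^(n−k)`-coefficient of its `t`-coefficient, up to the sign
`(−1)^k`. Expanding the determinant by Leibniz's formula gives Jacobi's formula: the
`t`-coefficient of `det (M + t·N)` is `trace (adj M · N)`; here it is `−trace (adj (X·I − A) · H)`.
Reading `adj (X·I − A) · (X·I − A) = χ_A(X)·I` as an identity of polynomials with matrix
coefficients, the coefficients of `adj (X·I − A)` satisfy a recursion which, solved downwards from
the top degree, gives `X^j ↦ ∑ᵢ c_{j+1+i} Aⁱ` with `c_m` the coefficients of `χ_A`; for
`j = n − k` this is `(−1)^(k−1) T_{k−1}(A)`.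
-/

/-- `σ_k(A)` for an `n×n` real matrix `A`, defined via the characteristic polynomial:
`det(t·I − A) = Σ_{k=0}^n (−1)^k σ_k(A) t^{n−k}`, i.e. `σ_k(A) = (−1)^k · coeff_{n−k}(charpoly A)`. -/
noncomputable def sigmaMat (n k : ℕ) (A : Matrix (Fin n) (Fin n) ℝ) : ℝ :=
  (-1 : ℝ) ^ k * (Matrix.charpoly A).coeff (n - k)

/-- The `k`-th Newton transformation
`T_k(A) = σ_k(A)·I − σ_{k−1}(A)·A + σ_{k−2}(A)·A² − ⋯ + (−1)^k A^k`. -/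
noncomputable def newtonT (n k : ℕ) (A : Matrix (Fin n) (Fin n) ℝ) :
    Matrix (Fin n) (Fin n) ℝ :=
  ∑ j ∈ Finset.range (k + 1), ((-1 : ℝ) ^ j * sigmaMat n (k - j) A) • A ^ j

open Polynomial Matrix Finset

namespace Polynomial

variable {R : Type*} [Ring R]

theorem coeff_eq_sum_add_of_mul_X_sub_C {Q c : R[X]} {a : R} (h : Q * (X - C a) = c)
    (j N : ℕ) :
    Q.coeff j = ∑ i ∈ range N, c.coeff (j + 1 + i) * a ^ i + Q.coeff (j + N) * a ^ N := by
  induction N with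
  | zero => simp
  | succ N ih =>
    have hstep : Q.coeff (j + N) = c.coeff (j + 1 + N) + Q.coeff (j + N + 1) * a := by
      rw [← h, add_right_comm, coeff_mul_X_sub_C]
      abel
    rw [ih, hstep, sum_range_succ, add_mul, mul_assoc, ← pow_succ', ← add_assoc]
    rfl

theorem coeff_eq_sum_of_mul_X_sub_C {Q c : R[X]} {a : R} (h : Q * (X - C a) = c) {j N : ℕ}
    (hN : c.natDegree ≤ j + N) :
    Q.coeff j = ∑ i ∈ range N, c.coeff (j + 1 + i) * a ^ i := by
  rw [coeff_eq_sum_add_of_mul_X_sub_C h j (N + (Q.natDegree + 1)), sum_range_add,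
    coeff_eq_zero_of_natDegree_lt (by omega), zero_mul, add_zero, add_eq_left]
  exact sum_eq_zero fun i _ => by rw [coeff_eq_zero_of_natDegree_lt (by omega), zero_mul]

theorem hasDerivAt_coeff_eval_C {𝕜 : Type*} [NontriviallyNormedField 𝕜] (P : 𝕜[X][X])
    (m : ℕ) : HasDerivAt (fun t => (P.eval (C t)).coeff m) ((P.coeff 1).coeff m) 0 := by
  set q : 𝕜[X] := ∑ j ∈ range (P.natDegree + 2), C ((P.coeff j).coeff m) * X ^ j
  have hq (t : 𝕜) : (P.eval (C t)).coeff m = q.eval t := by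
    rw [eval_eq_sum_range' (n := P.natDegree + 2) (by omega), finsetSum_coeff, eval_finsetSum]
    simp only [← C_pow, coeff_mul_C, eval_mul, eval_C, eval_pow, eval_X]
  have hq1 : q.derivative.eval 0 = (P.coeff 1).coeff m := by
    simp [q, ← coeff_zero_eq_eval_zero, coeff_derivative, finsetSum_coeff]
  simp_rw [hq, ← hq1]
  exact q.hasDerivAt 0

end Polynomial

namespace Matrix

variable {n R : Type*} [Fintype n] [DecidableEq n] [CommRing R]

theorem coeff_det_add_X_smul_one (M N : Matrix n n R) :
    (det (M.map C + (X : R[X]) • N.map C)).coeff 1 = trace (adjugate M * N) := by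
  have hcol (σ : Equiv.Perm n) (i : n) : (∏ l ∈ univ.erase i, M (σ l) l) * N (σ i) i =
      ∏ l, M.updateCol i (fun r => N r i) (σ l) l := by
    rw [← prod_erase_mul _ _ (mem_univ i), updateCol_self]
    congr 1
    exact prod_congr rfl fun l hl => by rw [updateCol_ne (ne_of_mem_erase hl)]
  calc (det (M.map C + (X : R[X]) • N.map C)).coeff 1
      = (derivative (det (M.map C + (X : R[X]) • N.map C))).eval 0 := by
        rw [← coeff_zero_eq_eval_zero, coeff_derivative, zero_add, Nat.cast_zero, zero_add,
          mul_one]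
    _ = ∑ σ : Equiv.Perm n, Equiv.Perm.sign σ •
          ∑ i, (∏ l ∈ univ.erase i, M (σ l) l) * N (σ i) i := by
        simp [det_apply, derivative_prod_finset, eval_finsetSum, eval_prod]
    _ = ∑ i, (M.updateCol i fun r => N r i).det := by
        simp_rw [hcol, det_apply, smul_sum]
        exact sum_comm
    _ = trace (adjugate M * N) := by
        simp only [← cramer_apply, cramer_eq_adjugate_mulVec, mulVec, dotProduct, trace, diag,
          mul_apply]

theorem coeff_trace_mul_map_C (Q : Matrix n n R[X]) (H : Matrix n n R) (j : ℕ) :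
    (trace (Q * H.map C)).coeff j = trace ((matPolyEquiv Q).coeff j * H) := by
  simp [trace, mul_apply, coeff_mul_C, matPolyEquiv_coeff_apply]

theorem coeff_matPolyEquiv_adjugate_charmatrix [Nontrivial R] (M : Matrix n n R) (j : ℕ) :
    (matPolyEquiv (adjugate (charmatrix M))).coeff j =
      ∑ i ∈ range (Fintype.card n - j), M.charpoly.coeff (j + 1 + i) • M ^ i := by
  have h : matPolyEquiv (adjugate (charmatrix M)) * (X - C M) =
      M.charpoly.map (algebraMap R (Matrix n n R)) := by
    rw [← matPolyEquiv_charmatrix, ← map_mul, adjugate_mul, ← matPolyEquiv_smul_one, charpoly]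
  have hdeg : (M.charpoly.map (algebraMap R (Matrix n n R))).natDegree ≤
      j + (Fintype.card n - j) :=
    natDegree_map_le.trans (by rw [charpoly_natDegree_eq_dim]; omega)
  rw [coeff_eq_sum_of_mul_X_sub_C h hdeg]
  simp only [coeff_map, ← Algebra.smul_def]

end Matrix

theorem newtonT_eq_smul_coeff_adjugate_charmatrix {n k : ℕ} (hk : k < n)
    (A : Matrix (Fin n) (Fin n) ℝ) :
    newtonT n k A = (-1 : ℝ) ^ k • (matPolyEquiv (charmatrix A).adjugate).coeff (n - 1 - k) := by
  rw [coeff_matPolyEquiv_adjugate_charmatrix, Fintype.card_fin,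
    show n - (n - 1 - k) = k + 1 by omega, newtonT, smul_sum]
  refine sum_congr rfl fun i hi => ?_
  rw [mem_range] at hi
  rw [sigmaMat, smul_smul, show n - 1 - k + 1 + i = n - (k - i) by omega, ← mul_assoc, ← pow_add,
    show i + (k - i) = k by omega]

theorem hasDerivAt_sigmaMat_general (n k : ℕ) (hk1 : 1 ≤ k) (hk2 : k ≤ n)
    (A H : Matrix (Fin n) (Fin n) ℝ) :
    HasDerivAt (fun t : ℝ => sigmaMat n k (A + t • H))
      (Matrix.trace (newtonT n (k - 1) A * H)) 0 := by
  set P : ℝ[X][X] := det ((charmatrix A).map C + (X : ℝ[X][X]) • (-H.map C).map C) with hP_def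
  have hP (t : ℝ) : (A + t • H).charpoly = P.eval (C t) := by
    rw [charpoly, hP_def, ← coe_evalRingHom, RingHom.map_det]
    congr 1
    ext i j : 1
    simp [charmatrix_apply, sub_add_eq_sub_sub, ← sub_eq_add_neg]
  have hT : trace (newtonT n (k - 1) A * H) = (-1) ^ k * (P.coeff 1).coeff (n - k) := by
    rw [coeff_det_add_X_smul_one, Matrix.mul_neg, trace_neg, coeff_neg, coeff_trace_mul_map_C,
      newtonT_eq_smul_coeff_adjugate_charmatrix (by omega), Matrix.smul_mul, trace_smul,
      show n - 1 - (k - 1) = n - k by omega, smul_eq_mul]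
    obtain ⟨j, rfl⟩ : ∃ j, k = j + 1 := ⟨k - 1, by omega⟩
    simp [pow_succ]
  simpa only [sigmaMat, hP, hT] using (hasDerivAt_coeff_eval_C P (n - k)).const_mul ((-1 : ℝ) ^ k)

/-- The function `t ↦ σ_k(A + tH)` is differentiable at `t = 0` with derivative
`trace(T_{k−1}(A) · H)`; i.e. `T_{k−1}(A)` is the gradient of `σ_k` in the matrix entries. -/
theorem hasDerivAt_sigmaMat (n k : ℕ) (hn : 1 ≤ n) (hk1 : 1 ≤ k) (hk2 : k ≤ n)
    (A H : Matrix (Fin n) (Fin n) ℝ) :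
    HasDerivAt (fun t : ℝ => sigmaMat n k (A + t • H))
      (Matrix.trace (newtonT n (k - 1) A * H)) 0 :=
  hasDerivAt_sigmaMat_general n k hk1 hk2 A H
end

section
/- Let n ≥ 2, 2 ≤ k ≤ n, and let λ ∈ Γ_k^+ ⊂ ℝ^n. Then for every pair of indices i ≠ j one has σ_{k−2;ij}(λ) > 0. -/
set_option linter.unusedSectionVars false
set_option maxHeartbeats 1000000

open Finset Polynomial Nat

noncomputable def E {α : Type*} [DecidableEq α] (lam : α → ℝ) (j : ℕ) (S : Finset α) : ℝ :=
  ∑ T ∈ S.powersetCard j, ∏ l ∈ T, lam l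

section
variable {α : Type*} [DecidableEq α] (lam : α → ℝ)

lemma E_zero (S : Finset α) : E lam 0 S = 1 := by simp [E]

lemma E_eq_zero {j : ℕ} {S : Finset α} (h : S.card < j) : E lam j S = 0 := by
  simp [E, Finset.powersetCard_eq_empty.2 h]

lemma E_rec {i : α} {S : Finset α} (hi : i ∈ S) (j : ℕ) :
    E lam (j+1) S = E lam (j+1) (S.erase i) + lam i * E lam j (S.erase i) := by
  have h1 : i ∉ S.erase i := Finset.notMem_erase _ _
  conv_lhs => rw [E, ← Finset.insert_erase hi, Finset.powersetCard_succ_insert h1]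
  rw [Finset.sum_union]
  · congr 1
    rw [Finset.sum_image, E, Finset.mul_sum]
    · refine Finset.sum_congr rfl fun T hT => ?_
      have hiT : i ∉ T := fun hc => h1 ((Finset.mem_powersetCard.1 hT).1 hc)
      rw [Finset.prod_insert hiT]
    · intro T hT T' hT' hE
      have hiT : i ∉ T := fun hc => h1 ((Finset.mem_powersetCard.1 hT).1 hc)
      have hiT' : i ∉ T' := fun hc => h1 ((Finset.mem_powersetCard.1 hT').1 hc)
      rw [← Finset.erase_insert hiT, ← Finset.erase_insert hiT', hE]
  · rw [Finset.disjoint_left]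
    intro T hT hT2
    obtain ⟨U, hU, rfl⟩ := Finset.mem_image.1 hT2
    exact h1 ((Finset.mem_powersetCard.1 hT).1 (Finset.mem_insert_self _ _))

lemma E_pos_of_pos {S : Finset α} (h : ∀ l ∈ S, 0 < lam l) {j : ℕ} (hj : j ≤ S.card) :
    0 < E lam j S := by
  apply Finset.sum_pos
  · intro T hT
    exact Finset.prod_pos fun l hl => h l ((Finset.mem_powersetCard.1 hT).1 hl)
  · exact Finset.powersetCard_nonempty.2 hj

/-- Cascade: deleting a nonpositive entry preserves positivity of σ_j up to level k. -/
lemma E_erase_pos_of_nonpos {i : α} {S : Finset α} (hi : i ∈ S) (hneg : lam i ≤ 0) {k : ℕ}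
    (hG : ∀ j, 1 ≤ j → j ≤ k → 0 < E lam j S) : ∀ j, j ≤ k → 0 < E lam j (S.erase i) := by
  intro j
  induction j with
  | zero => intro _; rw [E_zero]; norm_num
  | succ m ih =>
    intro hm
    have h1 : 0 < E lam m (S.erase i) := ih (le_trans (Nat.le_succ m) hm)
    have h2 := E_rec lam hi m
    have h3 : 0 < E lam (m+1) S := hG (m+1) (Nat.le_add_left 1 m) hm
    nlinarith

end


lemma rev_linear (a : ℝ) : (X - C a).reverse = 1 - C a * X := by
  ext n
  rw [coeff_reverse]
  rcases n with _ | _ | n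
  · simp [natDegree_X_sub_C, revAt_le]
  · simp [natDegree_X_sub_C, revAt_le, coeff_one]
  · rw [revAt_eq_self_of_lt (by rw [natDegree_X_sub_C]; omega)]
    simp [coeff_X, coeff_one]

lemma rr_derivative (p : ℝ[X]) (h : p.roots.card = p.natDegree) :
    (derivative p).roots.card = (derivative p).natDegree ∧
      (derivative p).natDegree = p.natDegree - 1 := by
  by_cases hd : p.natDegree = 0
  · rw [derivative_of_natDegree_zero hd]
    simp [hd]
  · have h1 := p.card_roots_le_derivative
    have h2 : (derivative p).natDegree ≤ p.natDegree - 1 := natDegree_derivative_le p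
    have h3 := (derivative p).card_roots'
    omega

lemma rr_iterate (p : ℝ[X]) (h : p.roots.card = p.natDegree) (m : ℕ) :
    (derivative^[m] p).roots.card = (derivative^[m] p).natDegree ∧
      (derivative^[m] p).natDegree = p.natDegree - m := by
  induction m with
  | zero => exact ⟨h, rfl⟩
  | succ m ih =>
    rw [Function.iterate_succ_apply']
    obtain ⟨ih1, ih2⟩ := ih
    obtain ⟨a, b⟩ := rr_derivative _ ih1
    exact ⟨a, by omega⟩


lemma rev_prod_key : ∀ (M : Multiset ℝ), (0:ℝ) ∉ M →
    ((M.map fun a => X - C a).prod).reverse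
      = C ((M.map fun a => -a).prod) * (M.map fun a => X - C a⁻¹).prod := by
  intro M
  refine Multiset.induction_on M ?_ ?_
  · intro _
    simp only [Multiset.map_zero, Multiset.prod_zero, map_one, mul_one]
    rw [← C_1, reverse_C]
  · intro a M ih h0
    have ha : a ≠ 0 := fun h => h0 (by rw [h]; exact Multiset.mem_cons_self _ _)
    have h0' : (0:ℝ) ∉ M := fun h => h0 (Multiset.mem_cons_of_mem h)
    simp only [Multiset.map_cons, Multiset.prod_cons]
    rw [reverse_mul_of_domain, ih h0', rev_linear]
    have key : (1 : ℝ[X]) - C a * X = C (-a) * (X - C a⁻¹) := by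
      rw [mul_sub, ← C_mul]
      have : (-a) * a⁻¹ = -1 := by field_simp
      rw [this]
      simp only [map_neg, map_one]
      ring
    rw [key, map_mul]
    ring

lemma rr_reverse (g : ℝ[X]) (hrr : g.roots.card = g.natDegree) (h0 : g.coeff 0 ≠ 0) :
    g.reverse.roots.card = g.reverse.natDegree ∧ g.reverse.natDegree = g.natDegree := by
  have hg0 : g ≠ 0 := fun h => by simp [h] at h0
  have h0M : (0:ℝ) ∉ g.roots := by
    intro hmem
    exact h0 (by rw [coeff_zero_eq_eval_zero]; exact (Polynomial.isRoot_of_mem_roots hmem))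
  have hfac := C_leadingCoeff_mul_prod_multiset_X_sub_C (p := g) hrr
  have hlc : g.leadingCoeff ≠ 0 := leadingCoeff_ne_zero.2 hg0
  have hprodne : ((g.roots.map fun a => -a).prod) ≠ 0 := by
    apply Multiset.prod_ne_zero
    intro hc
    obtain ⟨b, hb, hb2⟩ := Multiset.mem_map.1 hc
    exact h0M (neg_eq_zero.1 hb2 ▸ hb)
  have hrev : g.reverse = C (g.leadingCoeff * (g.roots.map fun a => -a).prod) *
      (g.roots.map fun a => X - C a⁻¹).prod := by
    conv_lhs => rw [← hfac]
    rw [reverse_mul_of_domain, reverse_C, rev_prod_key _ h0M, map_mul]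
    ring
  have hne : g.leadingCoeff * (g.roots.map fun a => -a).prod ≠ 0 := mul_ne_zero hlc hprodne
  have hmm : (Multiset.map (fun a => X - C a⁻¹) g.roots)
      = Multiset.map (fun a => X - C a) (Multiset.map (fun a => a⁻¹) g.roots) := by
    rw [Multiset.map_map]; rfl
  rw [hmm] at hrev
  constructor
  · rw [hrev, roots_C_mul _ hne, roots_multiset_prod_X_sub_C, natDegree_C_mul hne,
      natDegree_multiset_prod_X_sub_C_eq_card]
  · rw [hrev, natDegree_C_mul hne, natDegree_multiset_prod_X_sub_C_eq_card, ← hrr]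
    simp only [Multiset.card_map]


lemma dF1 (t : ℕ) : (t+1).descFactorial t = Nat.factorial (t+1) := by
  have h := Nat.descFactorial_self (t+1)
  rwa [Nat.descFactorial_succ, Nat.add_sub_cancel_left, one_mul] at h

lemma dF2 (t : ℕ) : 2 * ((t+2).descFactorial t) = Nat.factorial (t+2) := by
  have h := Nat.descFactorial_self (t+2)
  rw [Nat.descFactorial_succ, Nat.descFactorial_succ] at h
  have e1 : t + 2 - (t+1) = 1 := by omega
  have e2 : t + 2 - t = 2 := by omega
  rw [e1, e2, one_mul] at h
  omega

lemma dF_pos {n k : ℕ} (h : k ≤ n) : 0 < n.descFactorial k :=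
  Nat.pos_of_ne_zero (fun hc => by have := Nat.descFactorial_eq_zero_iff_lt.1 hc; omega)

lemma natNewton (t : ℕ) : ((t+1).descFactorial t)^2 ≤ 2 * (t.descFactorial t * ((t+2).descFactorial t)) := by
  have h2 := dF2 t
  rw [dF1, Nat.descFactorial_self]
  have : 2 * (Nat.factorial t * (t+2).descFactorial t) = Nat.factorial t * (2 * ((t+2).descFactorial t)) := by ring
  rw [this, h2]
  have e1 : Nat.factorial (t+1) = (t+1) * Nat.factorial t := Nat.factorial_succ t
  have e2 : Nat.factorial (t+2) = (t+2) * Nat.factorial (t+1) := Nat.factorial_succ (t+1)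
  rw [e2, e1]
  nlinarith [Nat.factorial_pos t, Nat.factorial_pos (t+1)]

theorem newton_E {α : Type*} [DecidableEq α] (lam : α → ℝ) (S : Finset α) (j : ℕ)
    (h0 : 0 ≤ E lam j S) (h2 : 0 ≤ E lam (j+2) S) :
    E lam j S * E lam (j+2) S ≤ (E lam (j+1) S)^2 := by
  rcases eq_or_lt_of_le h2 with h2' | h2'
  · rw [← h2', mul_zero]; positivity
  rcases eq_or_lt_of_le h0 with h0' | h0'
  · rw [← h0', zero_mul]; positivity
  set d := S.card with hd
  have hjd : j + 2 ≤ d := by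
    by_contra hc
    rw [E_eq_zero lam (by omega)] at h2'
    exact lt_irrefl _ h2'
  set p : ℝ[X] := ∏ l ∈ S, (X + C (lam l)) with hp
  -- coefficients of p
  have hco : ∀ m, m ≤ d → p.coeff (d - m) = E lam m S := by
    intro m hm
    rw [hp, Finset.prod_X_add_C_coeff S lam (Nat.sub_le d m)]
    have : d - (d - m) = m := Nat.sub_sub_self hm
    rw [← hd, this]
    rfl
  -- p is real-rooted of degree d
  have hprod : p = (Multiset.map (fun a => X - C a) (S.val.map fun l => -(lam l))).prod := by
    rw [hp, Finset.prod]
    rw [Multiset.map_map]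
    congr 1
    apply Multiset.map_congr rfl
    intro x _
    simp [sub_neg_eq_add]
  have hrrp : p.roots.card = p.natDegree ∧ p.natDegree = d := by
    constructor
    · rw [hprod, roots_multiset_prod_X_sub_C, natDegree_multiset_prod_X_sub_C_eq_card]
    · rw [hprod, natDegree_multiset_prod_X_sub_C_eq_card]
      simp [hd]
  set m := d - (j + 2) with hm
  set g : ℝ[X] := derivative^[m] p with hg
  obtain ⟨hgrr, hgdeg⟩ := rr_iterate p hrrp.1 m
  rw [hrrp.2] at hgdeg
  have hgdeg2 : g.natDegree = j + 2 := by rw [← hg] at hgdeg; omega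
  have hgc : ∀ r : ℕ, g.coeff r = ((r + m).descFactorial m : ℝ) * p.coeff (r + m) := by
    intro r
    rw [hg, Polynomial.coeff_iterate_derivative, nsmul_eq_mul]
  have hg0 : g.coeff 0 = ((m).descFactorial m : ℝ) * E lam (j+2) S := by
    rw [hgc 0, zero_add]
    congr 1
    have : m = d - (j+2) := hm
    rw [this, hco (j+2) hjd]
  have hg1 : g.coeff 1 = ((1 + m).descFactorial m : ℝ) * E lam (j+1) S := by
    rw [hgc 1]
    congr 1
    have e : 1 + m = d - (j+1) := by omega
    rw [e, hco (j+1) (by omega)]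
  have hg2 : g.coeff 2 = ((2 + m).descFactorial m : ℝ) * E lam j S := by
    rw [hgc 2]
    congr 1
    have e : 2 + m = d - j := by omega
    rw [e, hco j (by omega)]
  have hdfm : 0 < ((m).descFactorial m : ℝ) := by
    exact_mod_cast dF_pos (le_refl m)
  have hg0ne : g.coeff 0 ≠ 0 := by
    rw [hg0]; positivity
  obtain ⟨hhrr, hhdeg⟩ := rr_reverse g hgrr hg0ne
  set h : ℝ[X] := g.reverse with hh
  have hhdeg2 : h.natDegree = j + 2 := by rw [hhdeg, hgdeg2]
  have hhc : ∀ i, i ≤ j + 2 → h.coeff i = g.coeff (j + 2 - i) := by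
    intro i hi
    rw [hh, coeff_reverse, hgdeg2, revAt_le hi]
  set q : ℝ[X] := derivative^[j] h with hq
  obtain ⟨hqrr, hqdeg⟩ := rr_iterate h hhrr j
  rw [hhdeg2] at hqdeg
  rw [← hq] at hqrr hqdeg
  have hqdeg2 : q.natDegree = 2 := by omega
  have hqc : ∀ r : ℕ, q.coeff r = ((r + j).descFactorial j : ℝ) * h.coeff (r + j) := by
    intro r
    rw [hq, Polynomial.coeff_iterate_derivative, nsmul_eq_mul]
  have hq0 : q.coeff 0 = ((j).descFactorial j : ℝ) * g.coeff 2 := by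
    rw [hqc 0, zero_add, hhc j (by omega)]
    congr 2
    omega
  have hq1 : q.coeff 1 = ((1+j).descFactorial j : ℝ) * g.coeff 1 := by
    rw [hqc 1, hhc (1+j) (by omega)]
    congr 2
    omega
  have hq2 : q.coeff 2 = ((2+j).descFactorial j : ℝ) * g.coeff 0 := by
    rw [hqc 2, hhc (2+j) (by omega)]
    congr 2
    omega
  -- q has a real root
  have hq2ne : q.coeff 2 ≠ 0 := by
    rw [hq2]
    apply mul_ne_zero _ hg0ne
    have : (0:ℝ) < ((2+j).descFactorial j : ℝ) := by exact_mod_cast dF_pos (by omega)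
    positivity
  have hqne : q ≠ 0 := fun hc => hq2ne (by rw [hc]; simp)
  have hrootsne : q.roots ≠ 0 := by
    intro hc
    rw [hc] at hqrr
    simp at hqrr
    omega
  obtain ⟨x, hx⟩ := Multiset.exists_mem_of_ne_zero hrootsne
  have hevalx : q.eval x = 0 := (Polynomial.mem_roots hqne).1 hx
  have heval : q.coeff 2 * (x * x) + q.coeff 1 * x + q.coeff 0 = 0 := by
    have := Polynomial.eval_eq_sum_range' (show q.natDegree < 3 by omega) x
    rw [hevalx] at this
    rw [Finset.sum_range_succ, Finset.sum_range_succ, Finset.sum_range_one] at this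
    nlinarith [this]
  have hdisc := discrim_eq_sq_of_quadratic_eq_zero heval
  have hdisc2 : 4 * q.coeff 2 * q.coeff 0 ≤ (q.coeff 1)^2 := by
    rw [discrim] at hdisc
    nlinarith [sq_nonneg (2 * q.coeff 2 * x + q.coeff 1)]
  -- now unfold the coefficients
  rw [hq0, hq1, hq2, hg0, hg1, hg2] at hdisc2
  -- nat inequality
  have hnat : (((1+j).descFactorial j : ℝ) * ((1+m).descFactorial m))^2 ≤
      4 * (((2+j).descFactorial j : ℝ) * ((m).descFactorial m)) *
        (((j).descFactorial j : ℝ) * ((2+m).descFactorial m)) := by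
    have hA := natNewton j
    have hB := natNewton m
    have hmul := Nat.mul_le_mul hA hB
    have hcast : (((j+1).descFactorial j : ℝ))^2 * (((m+1).descFactorial m : ℝ))^2 ≤
        2 * ((j.descFactorial j : ℝ) * (((j+2).descFactorial j : ℕ) : ℝ)) *
          (2 * ((m.descFactorial m : ℝ) * (((m+2).descFactorial m : ℕ) : ℝ))) := by
      exact_mod_cast hmul
    have e1 : (2 + j) = (j + 2) := by omega
    have e2 : (2 + m) = (m + 2) := by omega
    have e3 : (1 + j) = (j + 1) := by omega
    have e4 : (1 + m) = (m + 1) := by omega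
    rw [e1, e2, e3, e4]
    nlinarith [hcast]
  have hB' : 0 < (((1+j).descFactorial j : ℝ) * ((1+m).descFactorial m)) := by
    have p1 : 0 < ((1+j).descFactorial j : ℝ) := by
      exact_mod_cast dF_pos (by omega)
    have p2 : 0 < ((1+m).descFactorial m : ℝ) := by
      exact_mod_cast dF_pos (by omega)
    positivity
  nlinarith [hdisc2, hnat, hB', h0', h2', mul_pos h0' h2',
    sq_nonneg (E lam (j+1) S), mul_pos hB' hB']


section
variable {α : Type*} [DecidableEq α] (lam : α → ℝ)

lemma main_lemma : ∀ (M : ℕ) (k : ℕ) (S : Finset α), S.card + k ≤ M → 1 ≤ k → k ≤ S.card →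
    (∀ j, 1 ≤ j → j ≤ k → 0 < E lam j S) →
    ∀ i ∈ S, ∀ j, 1 ≤ j → j ≤ k - 1 → 0 < E lam j (S.erase i) := by
  intro M
  induction M with
  | zero => intro k S hM hk1 _ _ i _ j _ _; omega
  | succ M IH =>
    intro k S hM hk1 hkcard hG i hi j hj1 hjk
    by_cases hjtop : j < k - 1
    · exact IH (j+1) S (by omega) (by omega) (by omega)
        (fun j' h1 h2 => hG j' h1 (by omega)) i hi j hj1 (by omega)
    · have hjeq : j = k - 1 := by omega
      subst hjeq
      have hk2 : 2 ≤ k := by omega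
      by_cases hli : lam i ≤ 0
      · exact E_erase_pos_of_nonpos lam hi hli hG (k-1) (by omega)
      push_neg at hli
      by_cases hall : ∀ l ∈ S, 0 < lam l
      · apply E_pos_of_pos lam (fun l hl => hall l (Finset.mem_of_mem_erase hl))
        rw [Finset.card_erase_of_mem hi]
        omega
      push_neg at hall
      obtain ⟨mm, hmmS, hmmle'⟩ := hall
      have hmmle : lam mm ≤ 0 := hmmle'
      have hmi : mm ≠ i := fun hc => by rw [hc] at hmmle; linarith
      have hS' : ∀ j', 1 ≤ j' → j' ≤ k → 0 < E lam j' (S.erase mm) := fun j' _ h2 =>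
        E_erase_pos_of_nonpos lam hmmS hmmle hG j' h2
      have hkcard' : k ≤ (S.erase mm).card := by
        by_contra hc
        have h1 := E_eq_zero lam (S := S.erase mm) (j := k) (by omega)
        have h2 := hS' k hk1 (le_refl k)
        linarith
      have hiS' : i ∈ S.erase mm := Finset.mem_erase.2 ⟨Ne.symm hmi, hi⟩
      have hScard1 : 1 ≤ S.card := Finset.card_pos.2 ⟨mm, hmmS⟩
      have hs : ∀ j', 1 ≤ j' → j' ≤ k - 1 → 0 < E lam j' ((S.erase mm).erase i) := by
        have hcard : (S.erase mm).card + k ≤ M := by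
          rw [Finset.card_erase_of_mem hmmS]; omega
        exact IH k (S.erase mm) hcard hk1 hkcard' hS' i hiS'
      set T := S.erase i with hT
      have hmmT : mm ∈ T := Finset.mem_erase.2 ⟨hmi, hmmS⟩
      have hTM : T.erase mm = (S.erase mm).erase i := by rw [hT, Finset.erase_right_comm]
      by_contra hcon
      push_neg at hcon
      -- E lam k T > 0
      have hrecS : E lam k S = E lam k T + lam i * E lam (k-1) T := by
        have h := E_rec lam hi (k-1)
        rw [show k - 1 + 1 = k from by omega] at h
        exact h
      have hekS : 0 < E lam k S := hG k hk1 (le_refl k)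
      have hekT : 0 < E lam k T := by nlinarith [mul_nonneg (le_of_lt hli) (neg_nonneg.2 hcon)]
      have hrecT1 : E lam k T = E lam k ((S.erase mm).erase i)
          + lam mm * E lam (k-1) ((S.erase mm).erase i) := by
        have h := E_rec lam hmmT (k-1)
        rw [show k - 1 + 1 = k from by omega, hTM] at h
        exact h
      have hrecT2 : E lam (k-1) T = E lam (k-1) ((S.erase mm).erase i)
          + lam mm * E lam (k-2) ((S.erase mm).erase i) := by
        have h := E_rec lam hmmT (k-2)
        rw [show k - 2 + 1 = k - 1 from by omega, hTM] at h
        exact h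
      have hs1 : 0 < E lam (k-1) ((S.erase mm).erase i) := hs (k-1) (by omega) (le_refl _)
      have hs2 : 0 < E lam (k-2) ((S.erase mm).erase i) := by
        rcases Nat.lt_or_ge 2 k with h | h
        · exact hs (k-2) (by omega) (by omega)
        · rw [show k - 2 = 0 from by omega, E_zero]
          norm_num
      have hsk : 0 < E lam k ((S.erase mm).erase i) := by nlinarith [mul_nonneg (neg_nonneg.2 hmmle) (le_of_lt hs1)]
      have hnewton := newton_E lam ((S.erase mm).erase i) (k-2) (le_of_lt hs2)
        (by rw [show k - 2 + 2 = k from by omega]; exact le_of_lt hsk)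
      rw [show k - 2 + 2 = k from by omega, show k - 2 + 1 = k - 1 from by omega] at hnewton
      have hprod : 0 < E lam k T * E lam (k-2) ((S.erase mm).erase i) := mul_pos hekT hs2
      have hlast : (E lam (k-1) ((S.erase mm).erase i)
          + lam mm * E lam (k-2) ((S.erase mm).erase i)) * E lam (k-1) ((S.erase mm).erase i) ≤ 0 := by
        rw [← hrecT2]
        exact mul_nonpos_of_nonpos_of_nonneg hcon (le_of_lt hs1)
      nlinarith [hprod, hnewton, hlast, hrecT1, hs1, hs2]
end


/-- The `k`-th elementary symmetric function of `lam = (λ_1, …, λ_n) ∈ ℝ^n`. -/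
noncomputable def esymm (n k : ℕ) (lam : Fin n → ℝ) : ℝ :=
  ∑ s ∈ Finset.univ.powersetCard k, ∏ i ∈ s, lam i

/-- `σ_{k;ij}(λ)` for `i ≠ j`: the `k`-th elementary symmetric function of the vector
obtained from `λ` by deleting the `i`-th and `j`-th entries. -/
noncomputable def esymmDel2 (n k : ℕ) (lam : Fin n → ℝ) (i j : Fin n) : ℝ :=
  ∑ s ∈ ((Finset.univ.erase i).erase j).powersetCard k, ∏ l ∈ s, lam l

/-- The Gårding cone `Γ_k^+ = {λ ∈ ℝ^n : σ_j(λ) > 0 for j = 1, …, k}`. -/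
def GammaPlus (n k : ℕ) : Set (Fin n → ℝ) :=
  {lam | ∀ j : ℕ, 1 ≤ j → j ≤ k → 0 < esymm n j lam}

/-- If `λ ∈ Γ_k^+` with `2 ≤ k ≤ n`, then `σ_{k−2;ij}(λ) > 0` for every pair `i ≠ j`. -/
theorem esymmDel2_pos (n k : ℕ) (hn : 2 ≤ n) (hk1 : 2 ≤ k) (hk2 : k ≤ n)
    (lam : Fin n → ℝ) (hlam : lam ∈ GammaPlus n k)
    (i j : Fin n) (hij : i ≠ j) :
    0 < esymmDel2 n (k - 2) lam i j := by
  have hcardu : (Finset.univ : Finset (Fin n)).card = n := by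
    rw [Finset.card_univ, Fintype.card_fin]
  have hG : ∀ j', 1 ≤ j' → j' ≤ k → 0 < E lam j' (Finset.univ : Finset (Fin n)) :=
    fun j' h1 h2 => hlam j' h1 h2
  have step1 : ∀ j', 1 ≤ j' → j' ≤ k - 1 → 0 < E lam j' (Finset.univ.erase i) :=
    main_lemma lam (n + k) k Finset.univ (by omega) (by omega) (by omega) hG i
      (Finset.mem_univ i)
  have hcarde : (Finset.univ.erase i).card = n - 1 := by
    rw [Finset.card_erase_of_mem (Finset.mem_univ i), hcardu]
  have hjmem : j ∈ Finset.univ.erase i := Finset.mem_erase.2 ⟨hij.symm, Finset.mem_univ j⟩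
  have step2 : ∀ j'', 1 ≤ j'' → j'' ≤ (k-1) - 1 → 0 < E lam j'' ((Finset.univ.erase i).erase j) :=
    main_lemma lam (n + k) (k-1) (Finset.univ.erase i) (by omega) (by omega) (by omega)
      step1 j hjmem
  show 0 < E lam (k-2) ((Finset.univ.erase i).erase j)
  rcases Nat.lt_or_ge 2 k with h | h
  · exact step2 (k-2) (by omega) (by omega)
  · rw [show k - 2 = 0 from by omega, E_zero]
    norm_num
end

section
/- Let B be a real symmetric 3×3 matrix and set E := B − (trace(B)/2)·I. If the eigenvalue vector of −E belongs to Γ_2^+ ⊂ ℝ³, then B is positive definite. (Geometric interpretation: on a 3-dimensional Riemannian manifold, with B the Ricci tensor, E = Ric − (R/2)g is the Einstein tensor, T_1(−E) = Ric; so if −E_g is 2-admissible at a point x then Ric_g(x) ≥ 0.) -/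
open Matrix

lemma esymm_one (n : ℕ) (lam : Fin n → ℝ) : esymm n 1 lam = ∑ i, lam i := by
  simp [esymm, Finset.powersetCard_one]

lemma esymm_three_two (lam : Fin 3 → ℝ) :
    esymm 3 2 lam = lam 0 * lam 1 + lam 0 * lam 2 + lam 1 * lam 2 := by
  have hpairs : (Finset.univ.powersetCard 2 : Finset (Finset (Fin 3))) =
      {{0, 1}, {0, 2}, {1, 2}} := by
    decide
  rw [esymm, hpairs, Finset.sum_insert (by decide), Finset.sum_insert (by decide),
    Finset.sum_singleton, Finset.prod_pair (by decide), Finset.prod_pair (by decide),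
    Finset.prod_pair (by decide), add_assoc]

lemma add_pos_of_sum_pos_of_esymm_two_pos {a b c : ℝ} (h₁ : 0 < a + b + c)
    (h₂ : 0 < a * b + a * c + b * c) : 0 < b + c := by
  have : 0 < (b + c) * (a + b + c) := by
    nlinarith [sq_nonneg (b + c), sq_nonneg b, sq_nonneg c]
  exact pos_of_mul_pos_left this h₁.le

lemma sum_sub_pos_of_mem_gammaPlus_three_two {lam : Fin 3 → ℝ} (h : lam ∈ GammaPlus 3 2)
    (i : Fin 3) : 0 < ∑ j, lam j - lam i := by
  have h₁ := h 1 le_rfl one_le_two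
  have h₂ := h 2 one_le_two le_rfl
  rw [esymm_one, Fin.sum_univ_three] at h₁
  rw [esymm_three_two] at h₂
  rw [Fin.sum_univ_three]
  fin_cases i <;> simp only [Fin.zero_eta, Fin.mk_one, Fin.reduceFinMk]
  · linarith [add_pos_of_sum_pos_of_esymm_two_pos h₁ h₂]
  · linarith [add_pos_of_sum_pos_of_esymm_two_pos (a := lam 1) (b := lam 0) (c := lam 2)
      (by linarith) (by linarith)]
  · linarith [add_pos_of_sum_pos_of_esymm_two_pos (a := lam 2) (b := lam 0) (c := lam 1)
      (by linarith) (by linarith)]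

open scoped ComplexOrder in
lemma Matrix.IsHermitian.posDef_smul_one_sub {n 𝕜 : Type*} [Fintype n] [DecidableEq n]
    [RCLike 𝕜] {A : Matrix n n 𝕜} (hA : A.IsHermitian) {c : ℝ}
    (hc : ∀ i, hA.eigenvalues i < c) : (c • (1 : Matrix n n 𝕜) - A).PosDef := by
  set U := hA.eigenvectorUnitary
  have hdiag : diagonal (fun i ↦ ((c - hA.eigenvalues i : ℝ) : 𝕜)) =
      c • 1 - diagonal (RCLike.ofReal ∘ hA.eigenvalues) := by
    ext i j
    rcases eq_or_ne i j with rfl | hij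
    · simp [RCLike.real_smul_eq_coe_mul]
    · simp [hij]
  have hconj : c • (1 : Matrix n n 𝕜) - A = (U : Matrix n n 𝕜) *
      diagonal (fun i ↦ ((c - hA.eigenvalues i : ℝ) : 𝕜)) * star (U : Matrix n n 𝕜) := by
    conv_lhs => rw [hA.spectral_theorem]
    rw [hdiag, mul_sub, sub_mul, mul_smul_comm, smul_mul_assoc, mul_one,
      Unitary.mul_star_self_of_mem U.2, Unitary.conjStarAlgAut_apply]
  rw [hconj, Unitary.isUnit_coe.posDef_star_right_conjugate_iff, posDef_diagonal_iff]
  exact fun i ↦ mod_cast sub_pos.2 (hc i)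

theorem posDef_of_neg_einstein_two_admissible_general
    (B : Matrix (Fin 3) (Fin 3) ℝ)
    (hE : (-(B - (Matrix.trace B / 2) • (1 : Matrix (Fin 3) (Fin 3) ℝ))).IsHermitian)
    (h : hE.eigenvalues ∈ GammaPlus 3 2) :
    B.PosDef := by
  have hsum : ∑ i, hE.eigenvalues i = Matrix.trace B / 2 := by
    have htrace := hE.trace_eq_sum_eigenvalues
    simp only [trace_neg, trace_sub, trace_smul, trace_one, Fintype.card_fin,
      RCLike.ofReal_real_eq_id, id, smul_eq_mul, Nat.cast_ofNat] at htrace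
    linarith
  have hpos := hE.posDef_smul_one_sub (c := Matrix.trace B / 2) fun i ↦ by
    linarith [sum_sub_pos_of_mem_gammaPlus_three_two h i]
  rwa [sub_neg_eq_add, add_sub_cancel] at hpos

/-- Let `B` be a real symmetric `3×3` matrix and `E = B − (trace B / 2)·I`.  If the
eigenvalue vector of `−E` belongs to `Γ_2^+ ⊂ ℝ³`, then `B` is positive definite.
(Geometrically: with `B = Ric`, `E` is the Einstein tensor; if `−E` is `2`-admissible
then `Ric > 0`.) -/
theorem posDef_of_neg_einstein_two_admissible
    (B : Matrix (Fin 3) (Fin 3) ℝ) (hB : B.IsHermitian)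
    (hE : (-(B - (Matrix.trace B / 2) • (1 : Matrix (Fin 3) (Fin 3) ℝ))).IsHermitian)
    (h : hE.eigenvalues ∈ GammaPlus 3 2) :
    B.PosDef :=
  posDef_of_neg_einstein_two_admissible_general B hE h
end

section
/- For every n ≥ 1 and 1 ≤ k ≤ n, the set Γ_k^+ = {λ ∈ ℝ^n : σ_j(λ) > 0 for all j = 1, …, k} is an open convex cone: it is open in ℝ^n, convex, and satisfies tλ ∈ Γ_k^+ for all λ ∈ Γ_k^+ and t > 0. -/
/-!
Openness and the cone property are immediate; convexity amounts to `Γ + Γ ⊆ Γ`. Write `σ_j^A` for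
the elementary symmetric function of the variables indexed by `A`, `Γ_k^A` for the corresponding
cone and `R_k^A = σ_{k+1}^A / σ_k^A`. Following Marcus–Lopes, one proves by induction on `k`, for
all `A` at once, that `R_k^A` is superadditive on `Γ_k^A` and that deleting a variable `i` maps
`Γ_{k+1}^A` into `Γ_k^{A∖i}`; superadditivity of `R_k` then makes `Γ_{k+1}` closed under addition.

For the superadditivity step, the identity `(k+2) σ_{k+2} = σ_1 σ_{k+1} - ∑ᵢ xᵢ² σ_k^{A∖i}` and
`σ_{k+1}^A / σ_k^{A∖i} = xᵢ + R_k^{A∖i}` write `(k+2) R_{k+1}` as the linear function `σ_1` minus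
the terms `xᵢ² / (xᵢ + R_k^{A∖i})`, each of which is subadditive because `R_k^{A∖i}` is
superadditive and `(X, a) ↦ X² / a` is jointly convex. For the deletion step, superadditivity of
`R_{k+1}` shows that adding `eᵢ` to `x` does not decrease `R_{k+1}(x)`; since
`σ_{j+1}(x + eᵢ) = σ_{j+1}(x) + σ_j^{A∖i}(x)`, this gives `σ_{k+1}^{A∖i} ≥ R_{k+1} σ_k^{A∖i} > 0`.
-/

open Finset

namespace Garding

variable {ι : Type*}

noncomputable def esymmOn (A : Finset ι) (j : ℕ) (x : ι → ℝ) : ℝ :=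
  ∑ s ∈ A.powersetCard j, ∏ i ∈ s, x i

section esymmOn

variable {A : Finset ι} {j : ℕ} {x : ι → ℝ}

@[simp]
lemma esymmOn_zero (A : Finset ι) (x : ι → ℝ) : esymmOn A 0 x = 1 := by
  simp [esymmOn]

lemma esymmOn_one (A : Finset ι) (x : ι → ℝ) : esymmOn A 1 x = ∑ i ∈ A, x i := by
  simp [esymmOn, powersetCard_one]

lemma esymmOn_eq_zero_of_card_lt (h : A.card < j) (x : ι → ℝ) : esymmOn A j x = 0 := by
  rw [esymmOn, powersetCard_eq_empty.2 h, sum_empty]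

lemma esymmOn_smul (A : Finset ι) (j : ℕ) (t : ℝ) (x : ι → ℝ) :
    esymmOn A j (t • x) = t ^ j * esymmOn A j x := by
  rw [esymmOn, esymmOn, mul_sum]
  refine sum_congr rfl fun _ hs => ?_
  simp [prod_mul_distrib, (mem_powersetCard.1 hs).2]

lemma continuous_esymmOn (A : Finset ι) (j : ℕ) : Continuous (esymmOn A j) := by
  unfold esymmOn
  fun_prop

lemma esymmOn_pos (hx : ∀ i ∈ A, 0 < x i) (hj : j ≤ A.card) : 0 < esymmOn A j x :=
  sum_pos (fun _ hs => prod_pos fun i hi => hx i ((mem_powersetCard.1 hs).1 hi))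
    (powersetCard_nonempty.2 hj)

lemma esymmOn_congr {y : ι → ℝ} (h : ∀ i ∈ A, x i = y i) : esymmOn A j x = esymmOn A j y :=
  sum_congr rfl fun _ hs => prod_congr rfl fun i hi => h i ((mem_powersetCard.1 hs).1 hi)

variable [DecidableEq ι]

lemma esymmOn_insert {i : ι} (hi : i ∉ A) (j : ℕ) (x : ι → ℝ) :
    esymmOn (insert i A) (j + 1) x = esymmOn A (j + 1) x + x i * esymmOn A j x := by
  have hnot : ∀ s ∈ A.powersetCard j, i ∉ s := fun s hs h => hi ((mem_powersetCard.1 hs).1 h)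
  rw [esymmOn, powersetCard_succ_insert hi, sum_union, sum_image, esymmOn, esymmOn, mul_sum]
  · exact congrArg _ (sum_congr rfl fun s hs => prod_insert (hnot s hs))
  · exact fun _ hs _ ht => (insert_erase_invOn.2.injOn (hnot _ hs) (hnot _ ht) ·)
  · refine disjoint_left.2 fun s hs hs' => ?_
    obtain ⟨t, -, rfl⟩ := mem_image.1 hs'
    exact hi ((mem_powersetCard.1 hs).1 (mem_insert_self i t))

lemma esymmOn_eq_erase {i : ι} (hi : i ∈ A) (j : ℕ) (x : ι → ℝ) :
    esymmOn A (j + 1) x = esymmOn (A.erase i) (j + 1) x + x i * esymmOn (A.erase i) j x := by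
  conv_lhs => rw [← insert_erase hi]
  exact esymmOn_insert (notMem_erase i A) j x

lemma esymmOn_add_single {i : ι} (hi : i ∈ A) (j : ℕ) (x : ι → ℝ) (t : ℝ) :
    esymmOn A (j + 1) (x + Pi.single i t) =
      esymmOn A (j + 1) x + t * esymmOn (A.erase i) j x := by
  have hoff : ∀ m, esymmOn (A.erase i) m (x + Pi.single i t) = esymmOn (A.erase i) m x :=
    fun m => esymmOn_congr fun l hl => by simp [ne_of_mem_erase hl]
  rw [esymmOn_eq_erase hi, esymmOn_eq_erase hi j x, hoff, hoff]
  simp only [Pi.add_apply, Pi.single_eq_same]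
  ring

lemma sum_mul_esymmOn_erase (A : Finset ι) (j : ℕ) (x : ι → ℝ) :
    ∑ i ∈ A, x i * esymmOn (A.erase i) j x = (j + 1) * esymmOn A (j + 1) x := by
  induction A using Finset.induction_on generalizing j with
  | empty => rw [esymmOn_eq_zero_of_card_lt (by simp), sum_empty, mul_zero]
  | insert a A ha ih =>
    rw [sum_insert ha, erase_insert ha, esymmOn_insert ha]
    cases j with
    | zero => simp [esymmOn_one, add_comm]
    | succ j =>
      have hterm : ∀ i ∈ A, x i * esymmOn ((insert a A).erase i) (j + 1) x =
          x i * esymmOn (A.erase i) (j + 1) x + x a * (x i * esymmOn (A.erase i) j x) :=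
        fun i hi => by
          rw [erase_insert_of_ne (ne_of_mem_of_not_mem hi ha).symm,
            esymmOn_insert fun h => ha (mem_of_mem_erase h)]
          ring
      rw [sum_congr rfl hterm, sum_add_distrib, ← mul_sum, ih, ih]
      push_cast
      ring

lemma sum_sq_mul_esymmOn_erase (A : Finset ι) (j : ℕ) (x : ι → ℝ) :
    ∑ i ∈ A, x i ^ 2 * esymmOn (A.erase i) j x =
      esymmOn A 1 x * esymmOn A (j + 1) x - (j + 2) * esymmOn A (j + 2) x := by
  have hterm : ∀ i ∈ A, x i ^ 2 * esymmOn (A.erase i) j x =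
      x i * esymmOn A (j + 1) x - x i * esymmOn (A.erase i) (j + 1) x := fun i hi => by
    rw [esymmOn_eq_erase hi j x]
    ring
  rw [sum_congr rfl hterm, sum_sub_distrib, ← sum_mul, ← esymmOn_one,
    sum_mul_esymmOn_erase]
  push_cast
  ring

end esymmOn

def gardingCone (A : Finset ι) (k : ℕ) : Set (ι → ℝ) :=
  {x | ∀ j, 1 ≤ j → j ≤ k → 0 < esymmOn A j x}

noncomputable def esymmRatio (A : Finset ι) (k : ℕ) (x : ι → ℝ) : ℝ :=
  esymmOn A (k + 1) x / esymmOn A k x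

section gardingCone

variable {A : Finset ι} {k j : ℕ} {x : ι → ℝ}

lemma gardingCone_antitone (A : Finset ι) : Antitone (gardingCone A) :=
  fun _ _ hk _ hx j hj1 hj => hx j hj1 (hj.trans hk)

lemma esymmOn_pos_of_mem_gardingCone (hx : x ∈ gardingCone A k) (hj : j ≤ k) :
    0 < esymmOn A j x := by
  rcases j with _ | j
  · simp
  · exact hx (j + 1) j.succ_pos hj

lemma le_card_of_mem_gardingCone (hx : x ∈ gardingCone A k) (hk : 1 ≤ k) : k ≤ A.card := by
  by_contra! h
  simpa [esymmOn_eq_zero_of_card_lt h] using hx k hk le_rfl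

lemma mem_gardingCone_of_pos (hx : ∀ i ∈ A, 0 < x i) (hk : k ≤ A.card) :
    x ∈ gardingCone A k :=
  fun _ _ hj => esymmOn_pos hx (hj.trans hk)

lemma smul_mem_gardingCone {t : ℝ} (ht : 0 < t) (hx : x ∈ gardingCone A k) :
    t • x ∈ gardingCone A k := fun j hj1 hj => by
  rw [esymmOn_smul]
  exact mul_pos (pow_pos ht j) (hx j hj1 hj)

lemma isOpen_gardingCone (A : Finset ι) (k : ℕ) : IsOpen (gardingCone A k) := by
  have : gardingCone A k = ⋂ j ∈ Icc 1 k, {x | 0 < esymmOn A j x} := by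
    ext x
    simp [gardingCone, and_imp]
  rw [this]
  exact isOpen_biInter_finset fun j _ => isOpen_lt continuous_const (continuous_esymmOn A j)

lemma esymmRatio_pos (hx : x ∈ gardingCone A (k + 1)) : 0 < esymmRatio A k x :=
  div_pos (esymmOn_pos_of_mem_gardingCone hx le_rfl)
    (esymmOn_pos_of_mem_gardingCone hx k.le_succ)

lemma div_esymmOn_erase [DecidableEq ι] {i : ι} (hi : i ∈ A)
    (h : esymmOn (A.erase i) k x ≠ 0) :
    esymmOn A (k + 1) x / esymmOn (A.erase i) k x = x i + esymmRatio (A.erase i) k x := by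
  rw [esymmRatio, esymmOn_eq_erase hi, add_div, mul_div_cancel_right₀ _ h, add_comm]

lemma mul_esymmRatio_succ [DecidableEq ι] (h : esymmOn A (k + 1) x ≠ 0) :
    (k + 2) * esymmRatio A (k + 1) x = esymmOn A 1 x -
      ∑ i ∈ A, x i ^ 2 / (esymmOn A (k + 1) x / esymmOn (A.erase i) k x) := by
  simp_rw [div_div_eq_mul_div]
  rw [← sum_div, sum_sq_mul_esymmOn_erase, esymmRatio]
  field_simp
  ring

end gardingCone

lemma add_sq_div_le {R : Type*} [Field R] [LinearOrder R] [IsStrictOrderedRing R]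
    {X Y a b c : R} (ha : 0 < a) (hb : 0 < b) (hc : a + b ≤ c) :
    (X + Y) ^ 2 / c ≤ X ^ 2 / a + Y ^ 2 / b :=
  calc (X + Y) ^ 2 / c ≤ (X + Y) ^ 2 / (a + b) :=
        div_le_div_of_nonneg_left (sq_nonneg _) (add_pos ha hb) hc
    _ ≤ X ^ 2 / a + Y ^ 2 / b := by
        simpa [Fin.sum_univ_two] using sq_sum_div_le_sum_sq_div univ ![X, Y] (g := ![a, b])
          (by simp [Fin.forall_fin_two, ha, hb])

variable (ι) in
def RatioSuperadditive (k : ℕ) : Prop :=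
  ∀ (A : Finset ι) (x y : ι → ℝ), x ∈ gardingCone A k → y ∈ gardingCone A k →
    x + y ∈ gardingCone A k → esymmRatio A k x + esymmRatio A k y ≤ esymmRatio A k (x + y)

variable (ι) in
def AddClosed (k : ℕ) : Prop :=
  ∀ (A : Finset ι) (x y : ι → ℝ), x ∈ gardingCone A k → y ∈ gardingCone A k →
    x + y ∈ gardingCone A k

variable (ι) in
def EraseStable [DecidableEq ι] (k : ℕ) : Prop :=
  ∀ (A : Finset ι) (x : ι → ℝ), x ∈ gardingCone A (k + 1) →
    ∀ i ∈ A, x ∈ gardingCone (A.erase i) k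

lemma ratioSuperadditive_zero : RatioSuperadditive ι 0 := fun A x y _ _ _ => by
  simp [esymmRatio, esymmOn_one, sum_add_distrib]

lemma AddClosed.succ {k : ℕ} (hC : AddClosed ι k) (hS : RatioSuperadditive ι k) :
    AddClosed ι (k + 1) := by
  intro A x y hx hy j hj1 hj
  have hx' := gardingCone_antitone A k.le_succ hx
  have hy' := gardingCone_antitone A k.le_succ hy
  have hz := hC A x y hx' hy'
  rcases hj.lt_or_eq with hj | rfl
  · exact hz j hj1 (Nat.lt_succ_iff.1 hj)
  · have hR : 0 < esymmRatio A k (x + y) :=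
      (add_pos (esymmRatio_pos hx) (esymmRatio_pos hy)).trans_le (hS A x y hx' hy' hz)
    exact (div_pos_iff_of_pos_right (esymmOn_pos_of_mem_gardingCone hz le_rfl)).1 hR

section induction

variable [DecidableEq ι] {k : ℕ}

lemma RatioSuperadditive.succ (hS : RatioSuperadditive ι k) (hD : EraseStable ι k) :
    RatioSuperadditive ι (k + 1) := by
  intro A x y hx hy hz
  let d (v : ι → ℝ) (i : ι) : ℝ := esymmOn A (k + 1) v / esymmOn (A.erase i) k v
  have herase_pos {v} (hv : v ∈ gardingCone A (k + 1)) {i} (hi : i ∈ A) :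
      0 < esymmOn (A.erase i) k v :=
    esymmOn_pos_of_mem_gardingCone (hD A v hv i hi) le_rfl
  have hd_pos {v} (hv : v ∈ gardingCone A (k + 1)) {i} (hi : i ∈ A) : 0 < d v i :=
    div_pos (esymmOn_pos_of_mem_gardingCone hv le_rfl) (herase_pos hv hi)
  have hterm : ∀ i ∈ A, (x + y) i ^ 2 / d (x + y) i ≤ x i ^ 2 / d x i + y i ^ 2 / d y i := by
    intro i hi
    refine add_sq_div_le (hd_pos hx hi) (hd_pos hy hi) ?_
    simp only [d, div_esymmOn_erase hi (herase_pos hx hi).ne',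
      div_esymmOn_erase hi (herase_pos hy hi).ne', div_esymmOn_erase hi (herase_pos hz hi).ne']
    have := hS _ x y (hD _ _ hx i hi) (hD _ _ hy i hi) (hD _ _ hz i hi)
    simp only [Pi.add_apply]
    linarith
  have hlin : esymmOn A 1 (x + y) = esymmOn A 1 x + esymmOn A 1 y := by
    simp [esymmOn_one, sum_add_distrib]
  have hk : (0 : ℝ) < k + 2 := by positivity
  rw [← mul_le_mul_iff_right₀ hk, mul_add,
    mul_esymmRatio_succ (esymmOn_pos_of_mem_gardingCone hx le_rfl).ne',
    mul_esymmRatio_succ (esymmOn_pos_of_mem_gardingCone hy le_rfl).ne',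
    mul_esymmRatio_succ (esymmOn_pos_of_mem_gardingCone hz le_rfl).ne', hlin]
  have hsum := sum_le_sum hterm
  rw [sum_add_distrib] at hsum
  simp only [d] at hsum
  linarith

lemma esymmRatio_mul_le_esymmOn_erase (hS : RatioSuperadditive ι (k + 1))
    (hC : AddClosed ι (k + 1)) {A : Finset ι} {x : ι → ℝ} (hx : x ∈ gardingCone A (k + 2))
    {i : ι} (hi : i ∈ A) :
    esymmRatio A (k + 1) x * esymmOn (A.erase i) k x ≤ esymmOn (A.erase i) (k + 1) x := by
  set r := esymmRatio A (k + 1) x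
  have hx' : x ∈ gardingCone A (k + 1) := gardingCone_antitone A (k + 1).le_succ hx
  -- `eᵢ` need not lie in the open cone, so superadditivity is applied to `eᵢ + ε • 1`
  -- and `ε → 0` is taken afterwards.
  let P (ε : ℝ) : ℝ := esymmOn A (k + 1 + 1) (x + Pi.single i 1 + ε • 1) -
    r * esymmOn A (k + 1) (x + Pi.single i 1 + ε • 1)
  have hP : ∀ ε > 0, 0 ≤ P ε := by
    intro ε hε
    have hw : Pi.single i 1 + ε • 1 ∈ gardingCone A (k + 2) := by
      refine mem_gardingCone_of_pos (fun l _ => ?_) (le_card_of_mem_gardingCone hx (by omega))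
      simp only [Pi.add_apply, Pi.smul_apply, Pi.one_apply, smul_eq_mul, mul_one, Pi.single_apply]
      split_ifs <;> linarith
    have hw' := gardingCone_antitone A (k + 1).le_succ hw
    have hxw := hC A x _ hx' hw'
    have hr : r ≤ esymmRatio A (k + 1) (x + (Pi.single i 1 + ε • 1)) := by
      linarith [esymmRatio_pos hw, hS A x _ hx' hw' hxw]
    rw [esymmRatio, le_div_iff₀ (esymmOn_pos_of_mem_gardingCone hxw le_rfl), ← add_assoc] at hr
    exact sub_nonneg.2 hr
  have hP0 : 0 ≤ P 0 := by
    have hcont : Continuous P := by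
      have := continuous_esymmOn A
      fun_prop
    exact ge_of_tendsto (hcont.tendsto 0 |>.mono_left nhdsWithin_le_nhds)
      (eventually_nhdsWithin_of_forall (s := Set.Ioi 0) hP)
  have hr : r * esymmOn A (k + 1) x = esymmOn A (k + 1 + 1) x :=
    div_mul_cancel₀ _ (esymmOn_pos_of_mem_gardingCone hx' le_rfl).ne'
  simp only [P, zero_smul, add_zero, esymmOn_add_single hi] at hP0
  linarith

lemma EraseStable.succ (hD : EraseStable ι k) (hS : RatioSuperadditive ι (k + 1))
    (hC : AddClosed ι (k + 1)) : EraseStable ι (k + 1) := by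
  intro A x hx i hi j hj1 hj
  have hxi := hD A x (gardingCone_antitone A (k + 1).le_succ hx) i hi
  rcases hj.lt_or_eq with hj | rfl
  · exact hxi j hj1 (Nat.lt_succ_iff.1 hj)
  · exact (mul_pos (esymmRatio_pos hx) (esymmOn_pos_of_mem_gardingCone hxi le_rfl)).trans_le
      (esymmRatio_mul_le_esymmOn_erase hS hC hx hi)

lemma ratioSuperadditive_addClosed_eraseStable (k : ℕ) :
    RatioSuperadditive ι k ∧ AddClosed ι k ∧ EraseStable ι k := by
  induction k with
  | zero =>
    exact ⟨ratioSuperadditive_zero, fun _ _ _ _ _ _ _ _ => by omega,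
      fun _ _ _ _ _ _ _ _ => by omega⟩
  | succ k ih =>
    obtain ⟨hS, hC, hD⟩ := ih
    have hS' := hS.succ hD
    have hC' := hC.succ hS
    exact ⟨hS', hC', hD.succ hS' hC'⟩

end induction

lemma add_mem_gardingCone {A : Finset ι} {k : ℕ} {x y : ι → ℝ} (hx : x ∈ gardingCone A k)
    (hy : y ∈ gardingCone A k) : x + y ∈ gardingCone A k := by
  classical
  exact (ratioSuperadditive_addClosed_eraseStable k).2.1 A x y hx hy

def gardingConvexCone (A : Finset ι) (k : ℕ) : ConvexCone ℝ (ι → ℝ) where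
  carrier := gardingCone A k
  smul_mem' _ hc _ hx := smul_mem_gardingCone hc hx
  add_mem' _ hx _ hy := add_mem_gardingCone hx hy

end Garding

open Garding

lemma gammaPlus_eq_gardingCone (n k : ℕ) : GammaPlus n k = gardingCone univ k := rfl

theorem gammaPlus_isOpen_convex_cone_general (n k : ℕ) :
    IsOpen (GammaPlus n k) ∧ Convex ℝ (GammaPlus n k) ∧
      ∀ lam ∈ GammaPlus n k, ∀ t : ℝ, 0 < t → t • lam ∈ GammaPlus n k := by
  rw [gammaPlus_eq_gardingCone]
  exact ⟨isOpen_gardingCone univ k, (gardingConvexCone univ k).convex,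
    fun _ hlam _ ht => smul_mem_gardingCone ht hlam⟩

/-- `Γ_k^+` is an open convex cone in `ℝ^n`. -/
theorem gammaPlus_isOpen_convex_cone (n k : ℕ) (hn : 1 ≤ n) (hk1 : 1 ≤ k) (hk2 : k ≤ n) :
    IsOpen (GammaPlus n k) ∧ Convex ℝ (GammaPlus n k) ∧
      ∀ lam ∈ GammaPlus n k, ∀ t : ℝ, 0 < t → t • lam ∈ GammaPlus n k :=
  gammaPlus_isOpen_convex_cone_general n k
end

section
/- (Maclaurin inequality on the Gårding cone.) Let n ≥ 1, 1 ≤ k ≤ n, and λ ∈ Γ_k^+ ⊂ ℝ^n. Then (σ_k(λ) / C(n,k))^{1/k} ≤ σ_1(λ)/n, where C(n,k) is the binomial coefficient. -/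
open Finset Polynomial

namespace Multiset

lemma esymm_zero {R : Type*} [CommSemiring R] (s : Multiset R) : s.esymm 0 = 1 := by
  simp [Multiset.esymm]

lemma esymm_one {R : Type*} [CommSemiring R] (s : Multiset R) : s.esymm 1 = s.sum := by
  simp [Multiset.esymm, powersetCard_one]

lemma esymm_cons {R : Type*} [CommSemiring R] (a : R) (s : Multiset R) (n : ℕ) :
    (a ::ₘ s).esymm (n + 1) = s.esymm (n + 1) + a * s.esymm n := by
  simp [Multiset.esymm, powersetCard_cons, sum_map_mul_left]

lemma esymm_one_sq {R : Type*} [CommRing R] (s : Multiset R) :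
    s.esymm 1 ^ 2 = (s.map (· ^ 2)).sum + 2 * s.esymm 2 := by
  induction s using Multiset.induction_on with
  | empty => simp [Multiset.esymm, powersetCard_zero_right]
  | cons a s ih =>
    rw [esymm_cons, esymm_cons, esymm_zero, map_cons, sum_cons]
    linear_combination ih

lemma sq_sum_le_card_mul_sum_sq (s : Multiset ℝ) :
    s.sum ^ 2 ≤ card s * (s.map (· ^ 2)).sum := by
  have h := _root_.sq_sum_le_card_mul_sum_sq (s := (univ : Finset s)) (f := fun x => (x : ℝ))
  rw [card_univ, card_coe, ← sum_map_val, map_univ_coe] at h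
  rwa [← map_univ s (· ^ 2), sum_map_val]

end Multiset

noncomputable def esymmMean (s : Multiset ℝ) (j : ℕ) : ℝ :=
  s.esymm j / (Multiset.card s).choose j

lemma esymmMean_zero (s : Multiset ℝ) : esymmMean s 0 = 1 := by
  simp [esymmMean, Multiset.esymm_zero]

lemma esymmMean_zero_mul_esymmMean_two_le (s : Multiset ℝ) :
    esymmMean s 0 * esymmMean s 2 ≤ esymmMean s 1 ^ 2 := by
  rw [esymmMean_zero, one_mul, esymmMean, esymmMean]
  rcases lt_or_ge (Multiset.card s) 2 with hm | hm
  · rw [Nat.choose_eq_zero_of_lt hm, Nat.cast_zero, div_zero]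
    positivity
  have hm' : (2 : ℝ) ≤ Multiset.card s := by exact_mod_cast hm
  have hsq := s.esymm_one_sq
  have hcs := s.sq_sum_le_card_mul_sum_sq
  rw [← s.esymm_one] at hcs
  rw [Nat.choose_one_right, Nat.cast_choose_two, div_pow,
    div_le_div_iff₀ (by nlinarith) (by positivity)]
  nlinarith

section Complement

variable {ι : Type*} [Fintype ι] [DecidableEq ι]

lemma esymm_map_univ_card_sub {R : Type*} [CommSemiring R] (f : ι → R) {r : ℕ}
    (hr : r ≤ Fintype.card ι) :
    (univ.val.map f).esymm (Fintype.card ι - r) = ∑ t ∈ univ.powersetCard r, ∏ i ∈ tᶜ, f i := by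
  rw [Finset.esymm_map_val]
  refine sum_nbij' (·ᶜ) (·ᶜ) ?_ ?_ (by simp) (by simp) (by simp)
  all_goals
    intro t ht
    simp only [mem_powersetCard_univ, card_compl] at ht ⊢
    omega

lemma esymm_map_univ_card_sub_one {R : Type*} [CommSemiring R] (f : ι → R)
    (hι : 1 ≤ Fintype.card ι) :
    (univ.val.map f).esymm (Fintype.card ι - 1) =
      (univ.val.map fun i => ∏ j ∈ {i}ᶜ, f j).esymm 1 := by
  rw [esymm_map_univ_card_sub f hι, esymm_map_val, powersetCard_one]
  simp

lemma esymm_map_univ_card_sub_two_mul_prod {R : Type*} [CommSemiring R] (f : ι → R)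
    (hι : 2 ≤ Fintype.card ι) :
    (univ.val.map f).esymm (Fintype.card ι - 2) * ∏ i, f i =
      (univ.val.map fun i => ∏ j ∈ {i}ᶜ, f j).esymm 2 := by
  rw [esymm_map_univ_card_sub f hι, esymm_map_val, sum_mul]
  refine sum_congr rfl fun t ht => ?_
  obtain ⟨a, b, hab, rfl⟩ := card_eq_two.1 (mem_powersetCard_univ.1 ht)
  have hcompl {x y : ι} (hxy : x ≠ y) : ({x}ᶜ : Finset ι) = insert y {x, y}ᶜ := by
    ext z; by_cases z = y <;> simp_all [eq_comm]
  rw [← prod_mul_prod_compl {a, b} f, prod_pair hab, prod_pair hab, hcompl hab,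
    pair_comm, hcompl hab.symm, prod_insert (by simp), prod_insert (by simp), pair_comm]
  ring

lemma esymmMean_map_univ_card_sub_two_mul_le (f : ι → ℝ) (hι : 2 ≤ Fintype.card ι) :
    esymmMean (univ.val.map f) (Fintype.card ι - 2) * esymmMean (univ.val.map f) (Fintype.card ι)
      ≤ esymmMean (univ.val.map f) (Fintype.card ι - 1) ^ 2 := by
  set G := univ.val.map fun i => ∏ j ∈ {i}ᶜ, f j
  have hcard : Multiset.card (univ.val.map f) = Fintype.card ι := by simp
  have hG : Multiset.card G = Fintype.card ι := by simp [G]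
  have hprod : (univ.val.map f).esymm (Fintype.card ι) = ∏ i, f i := by
    simpa using esymm_map_univ_card_sub f (Fintype.card ι).zero_le
  calc esymmMean (univ.val.map f) (Fintype.card ι - 2) * esymmMean (univ.val.map f) (Fintype.card ι)
      = esymmMean G 0 * esymmMean G 2 := by
        rw [esymmMean_zero, one_mul, esymmMean, esymmMean, esymmMean, div_mul_div_comm, hprod,
          esymm_map_univ_card_sub_two_mul_prod f hι, hcard, hG, Nat.choose_symm hι,
          Nat.choose_self, Nat.cast_one, mul_one]
    _ ≤ esymmMean G 1 ^ 2 := esymmMean_zero_mul_esymmMean_two_le G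
    _ = esymmMean (univ.val.map f) (Fintype.card ι - 1) ^ 2 := by
        rw [esymmMean, esymmMean, esymm_map_univ_card_sub_one f (by omega), hcard, hG,
          Nat.choose_symm (by omega)]

end Complement

section Derivative

variable (s : Multiset ℝ)

lemma card_roots_derivative_prod_X_sub_C :
    Multiset.card (derivative (s.map fun a => X - C a).prod).roots = Multiset.card s - 1 := by
  have hle := card_roots_le_derivative (s.map fun a => X - C a).prod
  have hge := card_roots' (derivative (s.map fun a => X - C a).prod)
  rw [roots_multiset_prod_X_sub_C] at hle
  rw [natDegree_derivative, natDegree_multiset_prod_X_sub_C_eq_card] at hge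
  omega

lemma card_mul_esymm_roots_derivative_prod_X_sub_C {i : ℕ} (hi : i < Multiset.card s) :
    (Multiset.card s : ℝ) * (derivative (s.map fun a => X - C a).prod).roots.esymm i =
      (Multiset.card s - i : ℕ) * s.esymm i := by
  set p := (s.map fun a => X - C a).prod
  have hdeg : p.natDegree = Multiset.card s := natDegree_multiset_prod_X_sub_C_eq_card s
  have hdeg' : (derivative p).natDegree = Multiset.card s - 1 := by
    rw [natDegree_derivative, hdeg]
  have hlead : (derivative p).leadingCoeff = Multiset.card s := by
    rw [leadingCoeff_derivative, hdeg, (monic_multiset_prod_of_monic _ _ fun a _ =>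
      monic_X_sub_C a).leadingCoeff, one_mul]
  have hsucc : ((Multiset.card s - 1 - i : ℕ) : ℝ) + 1 = (Multiset.card s - i : ℕ) := by
    exact_mod_cast (by omega : Multiset.card s - 1 - i + 1 = Multiset.card s - i)
  have vieta := coeff_eq_esymm_roots_of_card
    ((card_roots_derivative_prod_X_sub_C s).trans hdeg'.symm) (k := Multiset.card s - 1 - i)
    (by rw [hdeg']; omega)
  rw [hdeg', hlead, show Multiset.card s - 1 - (Multiset.card s - 1 - i) = i by omega,
    coeff_derivative, hsucc, show Multiset.card s - 1 - i + 1 = Multiset.card s - i by omega,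
    Multiset.prod_X_sub_C_coeff s (by omega),
    show Multiset.card s - (Multiset.card s - i) = i by omega] at vieta
  refine mul_left_cancel₀ (pow_ne_zero i (neg_ne_zero.2 one_ne_zero) : ((-1 : ℝ) ^ i) ≠ 0) ?_
  linear_combination -vieta

lemma esymmMean_roots_derivative_prod_X_sub_C {i : ℕ} (hi : i < Multiset.card s) :
    esymmMean (derivative (s.map fun a => X - C a).prod).roots i = esymmMean s i := by
  obtain ⟨n, hn⟩ : ∃ n, Multiset.card s = n + 1 := ⟨Multiset.card s - 1, by omega⟩
  have hchoose : (n.choose i : ℝ) * (n + 1) = (n + 1).choose i * (n + 1 - i : ℕ) := by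
    exact_mod_cast Nat.choose_mul_succ_eq n i
  have hkey := card_mul_esymm_roots_derivative_prod_X_sub_C s hi
  rw [hn] at hkey
  push_cast at hkey
  rw [esymmMean, esymmMean, card_roots_derivative_prod_X_sub_C, hn, Nat.add_sub_cancel,
    div_eq_div_iff (by exact_mod_cast (Nat.choose_pos (by omega)).ne')
      (by exact_mod_cast (Nat.choose_pos (by omega)).ne')]
  refine mul_left_cancel₀ (n.cast_add_one_ne_zero : (n : ℝ) + 1 ≠ 0) ?_
  linear_combination ((n + 1).choose i : ℝ) * hkey - s.esymm i * hchoose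

end Derivative

theorem esymmMean_mul_le_sq (s : Multiset ℝ) {j : ℕ} (hj : j + 2 ≤ Multiset.card s) :
    esymmMean s j * esymmMean s (j + 2) ≤ esymmMean s (j + 1) ^ 2 := by
  induction hs : Multiset.card s generalizing s with
  | zero => omega
  | succ m ih =>
    rcases hj.lt_or_eq with hlt | heq
    · have hr : Multiset.card (derivative (s.map fun a => X - C a).prod).roots = m := by
        rw [card_roots_derivative_prod_X_sub_C, hs, Nat.add_sub_cancel]
      rw [← esymmMean_roots_derivative_prod_X_sub_C s (i := j) (by omega),
        ← esymmMean_roots_derivative_prod_X_sub_C s (i := j + 1) (by omega),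
        ← esymmMean_roots_derivative_prod_X_sub_C s (i := j + 2) (by omega)]
      exact ih _ (by omega) hr
    · classical
      have htop := esymmMean_map_univ_card_sub_two_mul_le (fun x : s => (x : ℝ))
        (by rw [Multiset.card_coe]; omega)
      rw [Multiset.map_univ_coe, Multiset.card_coe, ← heq] at htop
      simpa using htop

section LogConcave

variable {a : ℕ → ℝ} {k : ℕ}

lemma succ_le_mul_of_mul_le_sq (h0 : a 0 = 1) (hpos : ∀ j ≤ k, 0 < a j)
    (hlc : ∀ j, j + 2 ≤ k → a j * a (j + 2) ≤ a (j + 1) ^ 2) :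
    ∀ j, j + 1 ≤ k → a (j + 1) ≤ a 1 * a j
  | 0, _ => by rw [h0, mul_one]
  | j + 1, hj => by
    have ih := succ_le_mul_of_mul_le_sq h0 hpos hlc j (by omega)
    refine le_of_mul_le_mul_right ?_ (hpos j (by omega))
    calc a (j + 2) * a j = a j * a (j + 2) := mul_comm _ _
      _ ≤ a (j + 1) * a (j + 1) := (hlc j hj).trans_eq (sq _)
      _ ≤ a (j + 1) * (a 1 * a j) := mul_le_mul_of_nonneg_left ih (hpos _ (by omega)).le
      _ = a 1 * a (j + 1) * a j := by ring

lemma le_pow_of_mul_le_sq (h0 : a 0 = 1) (hpos : ∀ j ≤ k, 0 < a j)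
    (hlc : ∀ j, j + 2 ≤ k → a j * a (j + 2) ≤ a (j + 1) ^ 2) :
    ∀ j ≤ k, a j ≤ a 1 ^ j
  | 0, _ => by rw [h0, pow_zero]
  | j + 1, hj => calc
    a (j + 1) ≤ a 1 * a j := succ_le_mul_of_mul_le_sq h0 hpos hlc j hj
    _ ≤ a 1 * a 1 ^ j := mul_le_mul_of_nonneg_left (le_pow_of_mul_le_sq h0 hpos hlc j (by omega))
      (hpos 1 (by omega)).le
    _ = a 1 ^ (j + 1) := (pow_succ' _ _).symm

end LogConcave

theorem maclaurin_inequality_general (n k : ℕ) (hk1 : 1 ≤ k)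
    (lam : Fin n → ℝ) (hlam : lam ∈ GammaPlus n k) :
    (esymm n k lam / (n.choose k : ℝ)) ^ ((1 : ℝ) / (k : ℝ)) ≤ esymm n 1 lam / (n : ℝ) := by
  set s := univ.val.map lam
  have hmean (j : ℕ) : esymmMean s j = esymm n j lam / n.choose j := by
    rw [esymmMean, esymm_map_val, Multiset.card_map, card_val, card_univ, Fintype.card_fin, esymm]
  have hkn : k ≤ n := by
    by_contra! h
    have hempty : (univ : Finset (Fin n)).powersetCard k = ∅ :=
      powersetCard_eq_empty.2 (by simpa using h)
    simpa [esymm, hempty] using hlam k hk1 le_rfl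
  have hpos : ∀ j ≤ k, 0 < esymmMean s j
    | 0, _ => by rw [esymmMean_zero]; exact one_pos
    | j + 1, hj => by
      rw [hmean]
      exact div_pos (hlam _ (by omega) hj) (by exact_mod_cast Nat.choose_pos (by omega))
  have hbound := le_pow_of_mul_le_sq (esymmMean_zero s) hpos
    (fun j hj => esymmMean_mul_le_sq s (by simpa [s] using hj.trans hkn)) k le_rfl
  have hE1 : esymmMean s 1 = esymm n 1 lam / n := by rw [hmean, Nat.choose_one_right]
  rw [← hmean, ← hE1, one_div,
    Real.rpow_inv_le_iff_of_pos (hpos k le_rfl).le (hpos 1 hk1).le (by positivity)]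
  exact_mod_cast hbound

/-- Maclaurin inequality on the Gårding cone:
`(σ_k(λ)/C(n,k))^{1/k} ≤ σ_1(λ)/n` for `λ ∈ Γ_k^+`. -/
theorem maclaurin_inequality (n k : ℕ) (hn : 1 ≤ n) (hk1 : 1 ≤ k) (hk2 : k ≤ n)
    (lam : Fin n → ℝ) (hlam : lam ∈ GammaPlus n k) :
    (esymm n k lam / (n.choose k : ℝ)) ^ ((1 : ℝ) / (k : ℝ)) ≤ esymm n 1 lam / (n : ℝ) :=
  maclaurin_inequality_general n k hk1 lam hlam
end

section
/- Let n ≥ 3 and let Ω ⊂ ℝ^n be an open neighborhood of the origin. Suppose w is a nonnegative C² function on Ω ∖ {0} satisfying Δw ≤ 0 on Ω ∖ {0}. Then liminf_{r → 0⁺} ( r^{n−2} · min_{|x| = r} w(x) ) < +∞. -/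
/-!
Compare `w` on the annulus `r ≤ |x| ≤ R` with the barrier `a (|x|^{2-n} - R^{2-n})`, the multiple
of the fundamental solution that equals `m = min_{|x|=r} w` on the inner sphere and vanishes on
the outer one, so `a ≥ r^{n-2} m`. By the weak minimum principle `w` dominates the barrier, and
evaluating at a fixed point `y` with `|y| = R/2` bounds `a`, hence `r^{n-2} m`, independently of
`r`. The minimum principle follows by perturbing `u` to `u - ε|x|²`, which is strictly
superharmonic and so cannot have an interior minimum, where all pure second partials are `≥ 0`.
-/

/-- Partial derivative `∂_i f` of a function on `ℝ^n`. -/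
noncomputable def pder (n : ℕ) (f : (Fin n → ℝ) → ℝ) (i : Fin n) : (Fin n → ℝ) → ℝ :=
  fun x => fderiv ℝ f x (Pi.single i 1)

/-- Laplacian `Δf(x) = Σ_i ∂_i∂_i f(x)`. -/
noncomputable def lap (n : ℕ) (f : (Fin n → ℝ) → ℝ) (x : Fin n → ℝ) : ℝ :=
  ∑ i : Fin n, pder n (pder n f i) i x

/-- The Euclidean sphere of radius `r` about the origin in `ℝ^n`. -/
def eucSphere (n : ℕ) (r : ℝ) : Set (Fin n → ℝ) :=
  {x | Real.sqrt (∑ i : Fin n, x i ^ 2) = r}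

open Filter Topology

variable {n : ℕ}

/-- The norm instance on `Fin n → ℝ` is the sup norm; this is the squared Euclidean one. -/
def sqNorm (n : ℕ) (x : Fin n → ℝ) : ℝ := ∑ i, x i ^ 2

theorem sqNorm_nonneg (x : Fin n → ℝ) : 0 ≤ sqNorm n x :=
  Finset.sum_nonneg fun i _ => sq_nonneg (x i)

theorem sqNorm_pos {x : Fin n → ℝ} (hx : x ≠ 0) : 0 < sqNorm n x := by
  obtain ⟨i, hi : x i ≠ 0⟩ := Function.ne_iff.mp hx
  exact Finset.sum_pos' (fun j _ => sq_nonneg (x j)) ⟨i, Finset.mem_univ i, by positivity⟩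

@[simp]
theorem sqNorm_zero : sqNorm n 0 = 0 := by simp [sqNorm]

theorem sqNorm_single (i : Fin n) (a : ℝ) : sqNorm n (Pi.single i a) = a ^ 2 := by
  simp [sqNorm, Pi.single_apply]

theorem norm_le_of_sqNorm_le {x : Fin n → ℝ} {R : ℝ} (hR : 0 ≤ R) (hx : sqNorm n x ≤ R ^ 2) :
    ‖x‖ ≤ R := by
  refine (pi_norm_le_iff_of_nonneg hR).mpr fun i => abs_le_of_sq_le_sq ?_ hR
  exact (Finset.single_le_sum (fun j _ => sq_nonneg (x j)) (Finset.mem_univ i)).trans hx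

theorem eucSphere_eq {r : ℝ} (hr : 0 ≤ r) : eucSphere n r = {x | sqNorm n x = r ^ 2} := by
  ext x
  change Real.sqrt (sqNorm n x) = r ↔ _
  rw [Real.sqrt_eq_iff_eq_sq (sqNorm_nonneg x) hr, Set.mem_ofPred_eq]

theorem contDiff_sqNorm : ContDiff ℝ 2 (sqNorm n) := by
  unfold sqNorm
  fun_prop

theorem continuous_sqNorm : Continuous (sqNorm n) := contDiff_sqNorm.continuous

theorem isCompact_sqNorm_preimage_Icc (a R : ℝ) : IsCompact (sqNorm n ⁻¹' Set.Icc a (R ^ 2)) :=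
  Metric.isCompact_of_isClosed_isBounded (isClosed_Icc.preimage continuous_sqNorm) <|
    (Metric.isBounded_closedBall (x := 0) (r := |R|)).subset fun x hx => by
      rw [Metric.mem_closedBall, dist_zero_right]
      exact norm_le_of_sqNorm_le (abs_nonneg R) (by simpa using hx.2)

theorem exists_sqNorm_le_subset {Ω : Set (Fin n → ℝ)} (hΩ : IsOpen Ω) (h0 : 0 ∈ Ω) :
    ∃ R > 0, {x | sqNorm n x ≤ R ^ 2} ⊆ Ω := by
  obtain ⟨δ, hδ, hball⟩ := Metric.isOpen_iff.mp hΩ 0 h0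
  refine ⟨δ / 2, by positivity, fun x hx => hball ?_⟩
  rw [Metric.mem_ball, dist_zero_right]
  linarith [norm_le_of_sqNorm_le (by positivity) hx]

theorem differentiableAt_pder {f : (Fin n → ℝ) → ℝ} {x : Fin n → ℝ} (hf : ContDiffAt ℝ 2 f x)
    (i : Fin n) : DifferentiableAt ℝ (pder n f i) x :=
  ((hf.fderiv_right (m := 1) (by norm_num)).differentiableAt one_ne_zero).clm_apply
    (differentiableAt_const _)

theorem tendsto_add_smul_single (x : Fin n → ℝ) (i : Fin n) :
    Tendsto (fun s : ℝ => x + s • Pi.single i 1) (𝓝 0) (𝓝 x) := by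
  have h : Continuous fun s : ℝ => x + s • (Pi.single i 1 : Fin n → ℝ) := by fun_prop
  simpa using h.tendsto 0

theorem hasDerivAt_comp_add_smul_single {f : (Fin n → ℝ) → ℝ} {x : Fin n → ℝ} (i : Fin n)
    {t : ℝ} (hf : DifferentiableAt ℝ f (x + t • Pi.single i 1)) :
    HasDerivAt (fun s : ℝ => f (x + s • Pi.single i 1)) (pder n f i (x + t • Pi.single i 1)) t :=
  hf.hasFDerivAt.comp_hasDerivAt t <| by
    simpa using ((hasDerivAt_id t).smul_const (Pi.single i 1 : Fin n → ℝ)).const_add x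

theorem pder_pder_eq_deriv_deriv {f : (Fin n → ℝ) → ℝ} {x : Fin n → ℝ}
    (hf : ContDiffAt ℝ 2 f x) (i : Fin n) :
    pder n (pder n f i) i x = deriv (deriv fun s : ℝ => f (x + s • Pi.single i 1)) 0 := by
  have hnear : ∀ᶠ s in 𝓝 (0 : ℝ), DifferentiableAt ℝ f (x + s • Pi.single i 1) :=
    tendsto_add_smul_single x i |>.eventually <| (hf.eventually (by simp)).mono
      fun y hy => hy.differentiableAt (by simp)
  have hfirst : (deriv fun s : ℝ => f (x + s • Pi.single i 1)) =ᶠ[𝓝 (0 : ℝ)]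
      fun s : ℝ => pder n f i (x + s • Pi.single i 1) :=
    hnear.mono fun s hs => (hasDerivAt_comp_add_smul_single i hs).deriv
  have hsecond := hasDerivAt_comp_add_smul_single i (t := 0)
    (by simpa using differentiableAt_pder hf i)
  rw [hfirst.deriv_eq, hsecond.deriv, zero_smul, add_zero]

theorem IsLocalMin.deriv_deriv_nonneg {g : ℝ → ℝ} {t : ℝ} (h : IsLocalMin g t)
    (hc : ContinuousAt g t) : 0 ≤ deriv (deriv g) t := by
  by_contra! hneg
  -- a negative second derivative would make `t` a local maximum as well
  have hconst : g =ᶠ[𝓝 t] fun _ => g t :=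
    h.and (isLocalMax_of_deriv_deriv_neg hneg h.deriv_eq_zero hc) |>.mono
      fun _ hs => le_antisymm hs.2 hs.1
  have : deriv (deriv g) t = 0 := by
    rw [hconst.deriv.deriv_eq]
    simp
  exact hneg.ne this

theorem IsLocalMin.lap_nonneg {u : (Fin n → ℝ) → ℝ} {x : Fin n → ℝ} (h : IsLocalMin u x)
    (hu : ContDiffAt ℝ 2 u x) : 0 ≤ lap n u x := by
  refine Finset.sum_nonneg fun i _ => ?_
  rw [pder_pder_eq_deriv_deriv hu i]
  refine IsLocalMin.deriv_deriv_nonneg ?_ (hu.continuousAt.comp_of_eq (by fun_prop) (by simp))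
  simpa [IsLocalMin, IsMinFilter] using (tendsto_add_smul_single x i).eventually h

theorem pder_sub_const_mul {u g : (Fin n → ℝ) → ℝ} {x : Fin n → ℝ} (hu : DifferentiableAt ℝ u x)
    (hg : DifferentiableAt ℝ g x) (c : ℝ) (i : Fin n) :
    pder n (fun y => u y - c * g y) i x = pder n u i x - c * pder n g i x := by
  simp [pder, fderiv_fun_sub hu (hg.const_mul c), fderiv_const_mul hg]

theorem lap_sub_const_mul {u g : (Fin n → ℝ) → ℝ} {x : Fin n → ℝ} (hu : ContDiffAt ℝ 2 u x)
    (hg : ContDiffAt ℝ 2 g x) (c : ℝ) :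
    lap n (fun y => u y - c * g y) x = lap n u x - c * lap n g x := by
  have hnear : ∀ᶠ y in 𝓝 x, DifferentiableAt ℝ u y ∧ DifferentiableAt ℝ g y :=
    ((hu.eventually (by simp)).and (hg.eventually (by simp))).mono
      fun y hy => ⟨hy.1.differentiableAt (by simp), hy.2.differentiableAt (by simp)⟩
  have hterm (i : Fin n) : pder n (pder n (fun y => u y - c * g y) i) i x =
      pder n (pder n u i) i x - c * pder n (pder n g i) i x := by
    have hfirst : pder n (fun y => u y - c * g y) i =ᶠ[𝓝 x]
        fun y => pder n u i y - c * pder n g i y :=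
      hnear.mono fun y hy => pder_sub_const_mul hy.1 hy.2 c i
    rw [← pder_sub_const_mul (differentiableAt_pder hu i) (differentiableAt_pder hg i)]
    simp only [pder] at hfirst ⊢
    rw [hfirst.fderiv_eq]
  simp only [lap, hterm, Finset.sum_sub_distrib, Finset.mul_sum]

theorem lap_sub_const (f : (Fin n → ℝ) → ℝ) (c : ℝ) (x : Fin n → ℝ) :
    lap n (fun y => f y - c) x = lap n f x := by
  have hpder : pder n (fun y => f y - c) = pder n f := by
    funext i y
    simp only [pder, fderiv_sub_const]
  simp only [lap, hpder]

theorem hasFDerivAt_comp_sqNorm {φ : ℝ → ℝ} {d : ℝ} {x : Fin n → ℝ}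
    (hφ : HasDerivAt φ d (sqNorm n x)) :
    HasFDerivAt (fun y => φ (sqNorm n y))
      (d • ∑ i, (2 * x i) • ContinuousLinearMap.proj (R := ℝ) (φ := fun _ : Fin n => ℝ) i) x := by
  refine hφ.comp_hasFDerivAt x (HasFDerivAt.fun_sum fun i _ => ?_)
  simpa [two_mul, add_smul, sq] using
    (hasFDerivAt_apply (𝕜 := ℝ) i x).fun_mul (hasFDerivAt_apply (𝕜 := ℝ) i x)

theorem pder_comp_sqNorm {φ : ℝ → ℝ} {d : ℝ} {x : Fin n → ℝ}
    (hφ : HasDerivAt φ d (sqNorm n x)) (i : Fin n) :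
    pder n (fun y => φ (sqNorm n y)) i x = d * (2 * x i) := by
  simp [pder, (hasFDerivAt_comp_sqNorm hφ).fderiv, Pi.single_apply]

theorem lap_comp_sqNorm {φ φ' : ℝ → ℝ} {φ'' : ℝ} {x : Fin n → ℝ}
    (hφ : ∀ᶠ t in 𝓝 (sqNorm n x), HasDerivAt φ (φ' t) t) (hφ' : HasDerivAt φ' φ'' (sqNorm n x)) :
    lap n (fun y => φ (sqNorm n y)) x = 4 * sqNorm n x * φ'' + 2 * n * φ' (sqNorm n x) := by
  have hterm (i : Fin n) : pder n (pder n (fun y => φ (sqNorm n y)) i) i x =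
      φ'' * (2 * x i) * (2 * x i) + φ' (sqNorm n x) * 2 := by
    have hfirst : pder n (fun y => φ (sqNorm n y)) i =ᶠ[𝓝 x]
        fun y => φ' (sqNorm n y) * (2 * y i) :=
      (continuous_sqNorm.tendsto x).eventually hφ |>.mono fun y hy => pder_comp_sqNorm hy i
    have hsecond :=
      (hasFDerivAt_comp_sqNorm hφ').fun_mul ((hasFDerivAt_apply (𝕜 := ℝ) i x).const_mul 2)
    simp only [pder] at hfirst ⊢
    rw [hfirst.fderiv_eq, hsecond.fderiv]
    simp [Pi.single_apply]
    ring
  rw [lap, Finset.sum_congr rfl fun i _ => hterm i, Finset.sum_add_distrib]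
  simp only [Finset.sum_const, Finset.card_univ, Fintype.card_fin, nsmul_eq_mul, sqNorm,
    Finset.mul_sum, Finset.sum_mul]
  congr 1
  · exact Finset.sum_congr rfl fun i _ => by ring
  · ring

theorem lap_sqNorm (x : Fin n → ℝ) : lap n (sqNorm n) x = 2 * n := by
  simpa using lap_comp_sqNorm (φ := id) (φ' := fun _ => 1) (φ'' := 0) (x := x)
    (Eventually.of_forall hasDerivAt_id) (hasDerivAt_const _ _)

theorem lap_sqNorm_rpow (p : ℝ) {x : Fin n → ℝ} (hx : x ≠ 0) :
    lap n (fun y => sqNorm n y ^ p) x = 2 * p * (n + 2 * p - 2) * sqNorm n x ^ (p - 1) := by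
  have hq := sqNorm_pos hx
  have hφ : ∀ᶠ t in 𝓝 (sqNorm n x), HasDerivAt (· ^ p) (p * t ^ (p - 1)) t :=
    (eventually_gt_nhds hq).mono fun t ht => Real.hasDerivAt_rpow_const (Or.inl ht.ne')
  have hφ' := (Real.hasDerivAt_rpow_const (p := p - 1) (Or.inl hq.ne')).const_mul p
  rw [lap_comp_sqNorm hφ hφ']
  have hsplit : sqNorm n x * sqNorm n x ^ (p - 1 - 1) = sqNorm n x ^ (p - 1) := by
    rw [mul_comm, ← Real.rpow_add_one hq.ne']
    ring_nf
  linear_combination (4 * p * (p - 1)) * hsplit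

/-- The fundamental solution `|x|^{2-n}` of the Laplacian, as a function of `t = |x|²`. -/
noncomputable def fundSolSq (n : ℕ) (t : ℝ) : ℝ := t ^ (1 - (n : ℝ) / 2)

theorem lap_fundSolSq_sqNorm {x : Fin n → ℝ} (hx : x ≠ 0) :
    lap n (fun y => fundSolSq n (sqNorm n y)) x = 0 := by
  simp only [fundSolSq, lap_sqNorm_rpow _ hx]
  ring

theorem contDiffAt_fundSolSq_sqNorm {x : Fin n → ℝ} (hx : x ≠ 0) :
    ContDiffAt ℝ 2 (fun y => fundSolSq n (sqNorm n y)) x :=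
  (Real.contDiffAt_rpow_const_of_ne (sqNorm_pos hx).ne').comp x contDiff_sqNorm.contDiffAt

theorem fundSolSq_strictAntiOn (hn : 3 ≤ n) : StrictAntiOn (fundSolSq n) (Set.Ioi 0) :=
  fun _ hs _ _ hst => Real.rpow_lt_rpow_of_neg hs hst (by
    have : (3 : ℝ) ≤ n := by exact_mod_cast hn
    linarith)

theorem pow_mul_fundSolSq_sq (hn : 2 ≤ n) {r : ℝ} (hr : 0 < r) :
    r ^ (n - 2) * fundSolSq n (r ^ 2) = 1 := by
  rw [fundSolSq, ← Real.rpow_natCast, ← Real.rpow_natCast, ← Real.rpow_mul hr.le,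
    ← Real.rpow_add hr, Nat.cast_sub hn]
  ring_nf
  exact Real.rpow_zero r

theorem weak_minimum_principle (hn : 0 < n) {S U : Set (Fin n → ℝ)} (hS : IsCompact S)
    (hU : IsOpen U) (hUS : U ⊆ S) {u : (Fin n → ℝ) → ℝ} (hc : ContinuousOn u S)
    (hu : ∀ x ∈ U, ContDiffAt ℝ 2 u x) (hlap : ∀ x ∈ U, lap n u x ≤ 0)
    (hbdry : ∀ x ∈ S \ U, 0 ≤ u x) {x : Fin n → ℝ} (hx : x ∈ S) : 0 ≤ u x := by
  obtain ⟨M, hM⟩ := hS.bddAbove_image continuous_sqNorm.continuousOn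
  have hM0 : 0 ≤ M := (sqNorm_nonneg x).trans (hM ⟨x, hx, rfl⟩)
  -- `lap (u - ε|y|²) = lap u - 2nε < 0`, so `u - ε|y|²` has no interior minimum
  have hperturb (ε : ℝ) (hε : 0 < ε) :
      ∃ y ∈ S \ U, u y - ε * sqNorm n y ≤ u x - ε * sqNorm n x := by
    obtain ⟨y, hyS, hmin⟩ := hS.exists_isMinOn (f := fun y => u y - ε * sqNorm n y) ⟨x, hx⟩
      (hc.sub (continuous_const.mul continuous_sqNorm).continuousOn)
    refine ⟨y, ⟨hyS, fun hyU => ?_⟩, hmin hx⟩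
    have hloc : 0 ≤ lap n (fun y => u y - ε * sqNorm n y) y :=
      (hmin.isLocalMin (Filter.mem_of_superset (hU.mem_nhds hyU) hUS)).lap_nonneg
        ((hu y hyU).sub (contDiffAt_const.mul contDiff_sqNorm.contDiffAt))
    rw [lap_sub_const_mul (hu y hyU) contDiff_sqNorm.contDiffAt, lap_sqNorm] at hloc
    have : (0 : ℝ) < n := by exact_mod_cast hn
    nlinarith [hlap y hyU]
  refine le_of_forall_pos_le_add fun δ hδ => ?_
  set ε := δ / (M + 1)
  obtain ⟨y, hy, hmin⟩ := hperturb ε (by positivity)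
  have hεM : ε * M ≤ δ := by
    rw [div_mul_eq_mul_div, div_le_iff₀ (by positivity)]
    nlinarith
  have hεy : ε * sqNorm n y ≤ ε * M := by gcongr; exact hM ⟨y, hy.1, rfl⟩
  have hεx : 0 ≤ ε * sqNorm n x := by have := sqNorm_nonneg x; positivity
  linarith [hbdry y hy]

theorem le_of_superharmonic_on_annulus (hn : 3 ≤ n) {r R m : ℝ} (hr : 0 < r) (hrR : r < R)
    {V : Set (Fin n → ℝ)} (hV : IsOpen V) (hAV : sqNorm n ⁻¹' Set.Icc (r ^ 2) (R ^ 2) ⊆ V)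
    {w : (Fin n → ℝ) → ℝ} (hw : ContDiffOn ℝ 2 w V) (hsuper : ∀ x ∈ V, lap n w x ≤ 0)
    (hin : ∀ x, sqNorm n x = r ^ 2 → m ≤ w x) (hout : ∀ x, sqNorm n x = R ^ 2 → 0 ≤ w x)
    {x : Fin n → ℝ} (hx : sqNorm n x ∈ Set.Icc (r ^ 2) (R ^ 2)) :
    m / (fundSolSq n (r ^ 2) - fundSolSq n (R ^ 2)) *
      (fundSolSq n (sqNorm n x) - fundSolSq n (R ^ 2)) ≤ w x := by
  have hr2R2 : r ^ 2 < R ^ 2 := by gcongr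
  have hd : 0 < fundSolSq n (r ^ 2) - fundSolSq n (R ^ 2) := sub_pos.mpr <|
    fundSolSq_strictAntiOn hn (pow_pos hr 2) (pow_pos (hr.trans hrR) 2) hr2R2
  set a := m / (fundSolSq n (r ^ 2) - fundSolSq n (R ^ 2))
  set g := fun y => fundSolSq n (sqNorm n y) - fundSolSq n (R ^ 2)
  have hne (y : Fin n → ℝ) (hy : r ^ 2 ≤ sqNorm n y) : y ≠ 0 := by
    rintro rfl
    rw [sqNorm_zero] at hy
    nlinarith
  have hg (y : Fin n → ℝ) (hy : r ^ 2 ≤ sqNorm n y) : ContDiffAt ℝ 2 g y :=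
    (contDiffAt_fundSolSq_sqNorm (hne y hy)).sub contDiffAt_const
  have hwC2 (y : Fin n → ℝ) (hy : sqNorm n y ∈ Set.Icc (r ^ 2) (R ^ 2)) : ContDiffAt ℝ 2 w y :=
    hw.contDiffAt (hV.mem_nhds (hAV hy))
  suffices 0 ≤ w x - a * g x by linarith
  refine weak_minimum_principle (u := fun y => w y - a * g y) (by omega)
    (isCompact_sqNorm_preimage_Icc _ _) (isOpen_Ioo.preimage continuous_sqNorm) (Set.preimage_mono Set.Ioo_subset_Icc_self)
    ((hw.continuousOn.mono hAV).sub (continuousOn_const.mul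
      fun y hy => (hg y hy.1).continuousAt.continuousWithinAt))
    (fun y hy => (hwC2 y (Set.Ioo_subset_Icc_self hy)).sub (contDiffAt_const.mul (hg y hy.1.le)))
    (fun y hy => ?_) (fun y hy => ?_) hx
  · rw [lap_sub_const_mul (hwC2 y (Set.Ioo_subset_Icc_self hy)) (hg y hy.1.le), lap_sub_const,
      lap_fundSolSq_sqNorm (hne y hy.1.le), mul_zero, sub_zero]
    exact hsuper y (hAV (Set.Ioo_subset_Icc_self hy))
  · have hy' : sqNorm n y ∈ Set.Icc (r ^ 2) (R ^ 2) \ Set.Ioo (r ^ 2) (R ^ 2) := hy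
    rw [Set.Icc_sdiff_Ioo_same hr2R2.le] at hy'
    rcases hy' with hy' | hy'
    · have : a * g y = m := by simp only [g, a, hy', div_mul_cancel₀ m hd.ne']
      linarith [hin y hy']
    · show 0 ≤ w y - a * (fundSolSq n (sqNorm n y) - fundSolSq n (R ^ 2))
      rw [hy', sub_self, mul_zero, sub_zero]
      exact hout y hy'

theorem pow_mul_sInf_sphere_le (hn : 3 ≤ n) {r ρ R : ℝ} (hr : 0 < r) (hrρ : r ≤ ρ) (hρR : ρ < R)
    {V : Set (Fin n → ℝ)} (hV : IsOpen V) (hAV : sqNorm n ⁻¹' Set.Icc (r ^ 2) (R ^ 2) ⊆ V)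
    {w : (Fin n → ℝ) → ℝ} (hw : ContDiffOn ℝ 2 w V) (hnonneg : ∀ x ∈ V, 0 ≤ w x)
    (hsuper : ∀ x ∈ V, lap n w x ≤ 0) {y : Fin n → ℝ} (hy : sqNorm n y = ρ ^ 2) :
    r ^ (n - 2) * sInf (w '' eucSphere n r) ≤
      w y / (fundSolSq n (ρ ^ 2) - fundSolSq n (R ^ 2)) := by
  have hR : 0 < R := hr.trans_le hrρ |>.trans hρR
  have hsphereV : eucSphere n r ⊆ V := fun x hx => hAV <| by
    rw [eucSphere_eq hr.le] at hx
    exact ⟨hx.ge, hx.le.trans (by gcongr; linarith)⟩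
  have hbdd : BddBelow (w '' eucSphere n r) :=
    ⟨0, by rintro _ ⟨x, hx, rfl⟩; exact hnonneg x (hsphereV hx)⟩
  have hin (x : Fin n → ℝ) (hx : sqNorm n x = r ^ 2) : sInf (w '' eucSphere n r) ≤ w x :=
    csInf_le hbdd ⟨x, by rwa [eucSphere_eq hr.le], rfl⟩
  have hcomp := le_of_superharmonic_on_annulus hn hr (hrρ.trans_lt hρR) hV hAV hw hsuper hin
    (fun x hx => hnonneg x (hAV ⟨hx ▸ by gcongr; linarith, hx.le⟩))
    (x := y) ⟨hy ▸ by gcongr, hy ▸ pow_le_pow_left₀ (by linarith) hρR.le 2⟩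
  rw [hy] at hcomp
  have hm : 0 ≤ sInf (w '' eucSphere n r) :=
    Real.sInf_nonneg (by rintro _ ⟨x, hx, rfl⟩; exact hnonneg x (hsphereV hx))
  have hd : 0 < fundSolSq n (r ^ 2) - fundSolSq n (R ^ 2) := sub_pos.mpr <|
    fundSolSq_strictAntiOn hn (pow_pos hr 2) (pow_pos hR 2) (by gcongr; linarith)
  have hK : 0 < fundSolSq n (ρ ^ 2) - fundSolSq n (R ^ 2) := sub_pos.mpr <|
    fundSolSq_strictAntiOn hn (pow_pos (hr.trans_le hrρ) 2) (pow_pos hR 2) (by gcongr; linarith)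
  have hrd : r ^ (n - 2) * (fundSolSq n (r ^ 2) - fundSolSq n (R ^ 2)) ≤ 1 := by
    rw [mul_sub, pow_mul_fundSolSq_sq (by omega) hr, sub_le_self_iff]
    exact mul_nonneg (by positivity) (Real.rpow_nonneg (by positivity) _)
  calc r ^ (n - 2) * sInf (w '' eucSphere n r)
      = sInf (w '' eucSphere n r) / (fundSolSq n (r ^ 2) - fundSolSq n (R ^ 2)) *
          (r ^ (n - 2) * (fundSolSq n (r ^ 2) - fundSolSq n (R ^ 2))) := by
        field_simp
    _ ≤ sInf (w '' eucSphere n r) / (fundSolSq n (r ^ 2) - fundSolSq n (R ^ 2)) :=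
        mul_le_of_le_one_right (by positivity) hrd
    _ ≤ w y / (fundSolSq n (ρ ^ 2) - fundSolSq n (R ^ 2)) := (le_div_iff₀ hK).mpr hcomp

/-- If `w ≥ 0` is `C²` and superharmonic (`Δw ≤ 0`) on `Ω ∖ {0}`, where `Ω` is an open
neighborhood of the origin in `ℝ^n`, then `liminf_{r→0⁺} r^{n−2} · min_{|x|=r} w < +∞`:
there is a constant `C` such that for every `ε > 0` some radius `0 < r < ε` satisfies
`r^{n−2} · min_{|x|=r} w ≤ C`. -/
theorem superharmonic_liminf_finite (n : ℕ) (hn : 3 ≤ n)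
    (Ω : Set (Fin n → ℝ)) (hΩopen : IsOpen Ω) (h0 : (0 : Fin n → ℝ) ∈ Ω)
    (w : (Fin n → ℝ) → ℝ)
    (hw : ContDiffOn ℝ 2 w (Ω \ {0}))
    (hwnonneg : ∀ x ∈ Ω \ {0}, 0 ≤ w x)
    (hsuper : ∀ x ∈ Ω \ {0}, lap n w x ≤ 0) :
    ∃ C : ℝ, ∀ ε : ℝ, 0 < ε → ∃ r : ℝ, 0 < r ∧ r < ε ∧ eucSphere n r ⊆ Ω ∧
      r ^ (n - 2) * sInf (w '' eucSphere n r) ≤ C := by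
  obtain ⟨R, hR, hballΩ⟩ := exists_sqNorm_le_subset hΩopen h0
  let y : Fin n → ℝ := Pi.single ⟨0, by omega⟩ (R / 2)
  refine ⟨w y / (fundSolSq n ((R / 2) ^ 2) - fundSolSq n (R ^ 2)), fun ε hε => ?_⟩
  set r := min (ε / 2) (R / 2)
  have hr : 0 < r := lt_min (by linarith) (by linarith)
  have hrR : r ≤ R / 2 := min_le_right _ _
  have hannulus : sqNorm n ⁻¹' Set.Icc (r ^ 2) (R ^ 2) ⊆ Ω \ {0} := fun x hx =>
    ⟨hballΩ hx.2, fun h0 => by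
      rw [Set.mem_singleton_iff.mp h0, Set.mem_preimage, sqNorm_zero] at hx
      nlinarith [hx.1]⟩
  refine ⟨r, hr, (min_le_left _ _).trans_lt (by linarith), fun x hx => ?_,
    pow_mul_sInf_sphere_le hn hr hrR (by linarith) (hΩopen.sdiff isClosed_singleton) hannulus
      hw hwnonneg hsuper (sqNorm_single _ _)⟩
  rw [eucSphere_eq hr.le] at hx
  exact hballΩ (hx.le.trans (by gcongr; linarith))
end

section
/- Let 0 < δ < 1/4 and set a := 1 − 2δ. For r > 0 define D_1(r) := 2/r and D_2(r) := (4(1−a)a + 2(4a−1)r − 4r²)/r². Then there exists r_1 > 0 such that for all 0 < r < r_1 the triple λ(r) := (D_1(r) − D_2(r), D_1(r), D_1(r)) ∈ ℝ³ satisfies σ_1(λ(r)) = 3D_1(r) − D_2(r) < 0 and σ_2(λ(r)) = D_1(r)(3D_1(r) − 2D_2(r)) < 0; in particular λ(r) does not belong to the closure of the cone Γ_2^− = −Γ_2^+. -/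
/-- The negative cone `Γ_2^− = {λ ∈ ℝ³ : −λ ∈ Γ_2^+}`. -/
def Gamma2Minus : Set (Fin 3 → ℝ) :=
  {lam | -lam ∈ GammaPlus 3 2}

lemma esymm1 (l : Fin 3 → ℝ) : esymm 3 1 l = l 0 + l 1 + l 2 := by
  have h : (Finset.univ.powersetCard 1 : Finset (Finset (Fin 3))) = {{0},{1},{2}} := by decide
  rw [esymm, h]
  rw [Finset.sum_insert (by decide), Finset.sum_insert (by decide), Finset.sum_singleton,
    Finset.prod_singleton, Finset.prod_singleton, Finset.prod_singleton]
  ring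

lemma esymm2 (l : Fin 3 → ℝ) : esymm 3 2 l = l 0 * l 1 + l 0 * l 2 + l 1 * l 2 := by
  have h : (Finset.univ.powersetCard 2 : Finset (Finset (Fin 3))) = {{0,1},{0,2},{1,2}} := by decide
  rw [esymm, h]
  rw [Finset.sum_insert (by decide), Finset.sum_insert (by decide), Finset.sum_singleton,
    Finset.prod_insert (by decide), Finset.prod_insert (by decide), Finset.prod_insert (by decide),
    Finset.prod_singleton, Finset.prod_singleton]
  ring

lemma closure_sub : closure Gamma2Minus ⊆ {l : Fin 3 → ℝ | 0 ≤ l 0 * l 1 + l 0 * l 2 + l 1 * l 2} := by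
  apply closure_minimal
  · intro l hl
    have h2 := hl 2 (by norm_num) (by norm_num)
    have := esymm2 (-l)
    simp only [Pi.neg_apply] at this
    rw [this] at h2
    have : l 0 * l 1 + l 0 * l 2 + l 1 * l 2 = -l 0 * -l 1 + -l 0 * -l 2 + -l 1 * -l 2 := by ring
    rw [Set.mem_setOf_eq, this]
    exact le_of_lt h2
  · have hc : Continuous fun l : Fin 3 → ℝ => l 0 * l 1 + l 0 * l 2 + l 1 * l 2 := by
      fun_prop
    exact isClosed_le continuous_const hc

/-- With `a = 1 − 2δ`, `0 < δ < 1/4`, `D_1(r) = 2/r` and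
`D_2(r) = (4(1−a)a + 2(4a−1)r − 4r²)/r²`, for all sufficiently small `r > 0` the triple
`λ(r) = (D_1 − D_2, D_1, D_1)` satisfies `σ_1(λ(r)) = 3D_1 − D_2 < 0` and
`σ_2(λ(r)) = D_1(3D_1 − 2D_2) < 0`; in particular `λ(r)` is not in the closure of `Γ_2^−`. -/
theorem outside_negative_cone (δ : ℝ) (hδ0 : 0 < δ) (hδ : δ < 1 / 4) :
    ∃ r₁ : ℝ, 0 < r₁ ∧
      ∀ r : ℝ, 0 < r → r < r₁ →
        ∀ a D₁ D₂ : ℝ, a = 1 - 2 * δ → D₁ = 2 / r →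
          D₂ = (4 * (1 - a) * a + 2 * (4 * a - 1) * r - 4 * r ^ 2) / r ^ 2 →
          (esymm 3 1 ![D₁ - D₂, D₁, D₁] = 3 * D₁ - D₂ ∧ 3 * D₁ - D₂ < 0) ∧
          (esymm 3 2 ![D₁ - D₂, D₁, D₁] = D₁ * (3 * D₁ - 2 * D₂) ∧
            D₁ * (3 * D₁ - 2 * D₂) < 0) ∧
          ![D₁ - D₂, D₁, D₁] ∉ closure Gamma2Minus := by
  have hδ2 : 0 < 1 - 2 * δ := by linarith
  refine ⟨min 1 (δ * (1 - 2 * δ) / 2), lt_min one_pos (by positivity), ?_⟩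
  intro r hr hrlt a D₁ D₂ ha hD₁ hD₂
  have hr1 : r < 1 := lt_of_lt_of_le hrlt (min_le_left _ _)
  have hr2 : r < δ * (1 - 2 * δ) / 2 := lt_of_lt_of_le hrlt (min_le_right _ _)
  have hrne : r ≠ 0 := ne_of_gt hr
  have hrsq : (0:ℝ) < r ^ 2 := by positivity
  -- key identities multiplied through by r^2
  have key1 : (3 * D₁ - D₂) * r ^ 2 = 4 * r ^ 2 + 16 * δ * r - 8 * δ * (1 - 2 * δ) := by
    subst ha hD₁ hD₂; field_simp; ring
  have key2 : (3 * D₁ - 2 * D₂) * r ^ 2 = 8 * r ^ 2 + (32 * δ - 6) * r - 16 * δ * (1 - 2 * δ) := by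
    subst ha hD₁ hD₂; field_simp; ring
  have hN1 : 4 * r ^ 2 + 16 * δ * r - 8 * δ * (1 - 2 * δ) < 0 := by nlinarith
  have hN2 : 8 * r ^ 2 + (32 * δ - 6) * r - 16 * δ * (1 - 2 * δ) < 0 := by nlinarith
  have h1 : 3 * D₁ - D₂ < 0 := by nlinarith [key1, hN1]
  have h2 : 3 * D₁ - 2 * D₂ < 0 := by nlinarith [key2, hN2]
  have hD₁pos : 0 < D₁ := by rw [hD₁]; positivity
  have hprod : D₁ * (3 * D₁ - 2 * D₂) < 0 := mul_neg_of_pos_of_neg hD₁pos h2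
  refine ⟨⟨?_, h1⟩, ⟨?_, hprod⟩, ?_⟩
  · rw [esymm1]; simp [Matrix.cons_val_zero, Matrix.cons_val_one]; ring
  · rw [esymm2]; simp [Matrix.cons_val_zero, Matrix.cons_val_one]; ring
  · intro hmem
    have := closure_sub hmem
    simp only [Set.mem_setOf_eq, Matrix.cons_val_zero, Matrix.cons_val_one, Matrix.head_cons,
      Matrix.cons_val_two, Matrix.tail_cons] at this
    nlinarith
end
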